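/- arXiv:math-ph/0311046 — 7 statements merged into one kernel-verified Lean document; each statement's English description precedes it below -/
import Mathlib

section
/- In Example 2.2, for each m ∈ ℕ, Tr{[R(m)Z^m]†[R(m)Z^m]} = csc²x · [ρ₁(m)² λ(r)^{2m} + ρ₂(m)² μ(r)^{2m}]. -/
open Real
open scoped Matrix

/-- Example 2.2: `Tr{[R(m)Z^m]†[R(m)Z^m]} = csc²x [ρ₁(m)² λ(r)^{2m} + ρ₂(m)² μ(r)^{2m}]`. -/
theorem stmt_3 (x r ζ : ℝ) (hx : Real.sin x ≠ 0) (hr : 0 ≤ r)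
    (hζ : ζ ∈ Set.Ico 0 (2 * π))
    (ρ₁ ρ₂ : ℕ → ℝ) (lam mu : ℝ → ℝ)
    (U : Matrix (Fin 2) (Fin 2) ℂ)
    (hU : U = !![((Real.cos x : ℝ) : ℂ), ((-Real.sin x : ℝ) : ℂ);
                 ((Real.sin x : ℝ) : ℂ), ((Real.cos x : ℝ) : ℂ)])
    (Z : Matrix (Fin 2) (Fin 2) ℂ)
    (hZ : Z = Complex.exp (ζ * Complex.I) •
      (U * Matrix.diagonal ![((lam r : ℝ) : ℂ), ((mu r : ℝ) : ℂ)] * Uᵀ))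
    (R : ℕ → Matrix (Fin 2) (Fin 2) ℂ)
    (hR : ∀ m : ℕ, R m =
      !![((ρ₁ m * (Real.cos x / Real.sin x) : ℝ) : ℂ), ((ρ₁ m : ℝ) : ℂ);
         ((ρ₂ m : ℝ) : ℂ), ((-(ρ₂ m * (Real.cos x / Real.sin x)) : ℝ) : ℂ)])
    (m : ℕ) :
    Matrix.trace ((R m * Z ^ m)ᴴ * (R m * Z ^ m)) =
      ((((Real.sin x)⁻¹) ^ 2 *
        ((ρ₁ m) ^ 2 * (lam r) ^ (2 * m) + (ρ₂ m) ^ 2 * (mu r) ^ (2 * m)) : ℝ) : ℂ) := by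
  have hpy := Real.sin_sq_add_cos_sq x
  set sx := Real.sin x with hsx
  set cx := Real.cos x with hcx
  have hsc : (sx : ℂ) * sx + cx * cx = 1 := by
    norm_cast
    nlinarith [hpy]
  set D : Matrix (Fin 2) (Fin 2) ℂ :=
    Matrix.diagonal ![((lam r : ℝ) : ℂ), ((mu r : ℝ) : ℂ)] with hD
  have hUtU : Uᵀ * U = 1 := by
    subst hU
    ext i j
    fin_cases i <;> fin_cases j <;>
      simp [Matrix.mul_apply, Fin.sum_univ_two, Matrix.one_apply, Matrix.vecHead, Matrix.vecTail, -Complex.ofReal_cos, -Complex.ofReal_sin] <;> ring_nf <;>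
      linear_combination hsc
  have hUUt : U * Uᵀ = 1 := by
    subst hU
    ext i j
    fin_cases i <;> fin_cases j <;>
      simp [Matrix.mul_apply, Fin.sum_univ_two, Matrix.one_apply, Matrix.vecHead, Matrix.vecTail, -Complex.ofReal_cos, -Complex.ofReal_sin] <;> ring_nf <;>
      linear_combination hsc
  have hZm : Z ^ m = (Complex.exp (ζ * Complex.I)) ^ m • (U * D ^ m * Uᵀ) := by
    induction m with
    | zero => simp [hUUt]
    | succ n ih =>
      rw [pow_succ, ih, hZ, pow_succ]
      rw [Matrix.smul_mul, Matrix.mul_smul, smul_smul]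
      congr 1
      rw [pow_succ D]
      calc U * D ^ n * Uᵀ * (U * D * Uᵀ)
          = U * D ^ n * (Uᵀ * U) * D * Uᵀ := by noncomm_ring
        _ = U * (D ^ n * D) * Uᵀ := by rw [hUtU]; noncomm_ring
  have hDm : D ^ m = Matrix.diagonal ![(((lam r : ℝ) : ℂ)) ^ m, (((mu r : ℝ) : ℂ)) ^ m] := by
    rw [hD, Matrix.diagonal_pow]
    ext i j
    fin_cases i <;> fin_cases j <;> simp [Matrix.diagonal_apply, Pi.pow_apply]
  have hc : star (Complex.exp (ζ * Complex.I) ^ m) *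
      Complex.exp (ζ * Complex.I) ^ m = 1 := by
    rw [show (star (Complex.exp (ζ * Complex.I) ^ m)) =
      (starRingEnd ℂ) (Complex.exp (ζ * Complex.I) ^ m) from rfl, map_pow, ← Complex.exp_conj, ← mul_pow, ← Complex.exp_add]
    have : (starRingEnd ℂ) (↑ζ * Complex.I) = -(↑ζ * Complex.I) := by
      simp [Complex.conj_ofReal]
    rw [this, neg_add_cancel, Complex.exp_zero, one_pow]
  rw [hZm, Matrix.mul_smul, Matrix.conjTranspose_smul, Matrix.smul_mul, Matrix.mul_smul,
    smul_smul, hc, one_smul]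
  have hxC : ((Real.sin x : ℝ) : ℂ) ≠ 0 := by exact_mod_cast hx
  rw [hR, hU, hDm]
  simp only [Matrix.trace, Matrix.diag, Matrix.mul_apply, Matrix.conjTranspose_apply,
    Fin.sum_univ_two, Matrix.transpose_apply, Matrix.cons_val', Matrix.cons_val_zero,
    Matrix.cons_val_one, Matrix.head_cons, Matrix.head_fin_const, Matrix.empty_val',
    Matrix.cons_val_fin_one, Matrix.diagonal_apply, Matrix.one_apply, Finset.sum_apply]
  simp only [Matrix.diagonal, Matrix.of_apply, Fin.isValue, ite_true, ite_false,
    Fin.zero_eq_one_iff, Fin.one_eq_zero_iff, Nat.succ_ne_self, if_neg, if_pos,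
    Matrix.cons_val_zero, Matrix.cons_val_one, Matrix.head_cons]
  push_cast [Complex.star_def, map_neg, map_div₀, map_pow, map_zero, map_mul, map_add, Complex.conj_ofReal, pow_mul]
  field_simp [show (sx : ℂ) ≠ 0 from hxC]
  ring_nf
  linear_combination ((↑(ρ₁ m)^2 * ↑(lam r)^(m*2) + ↑(ρ₂ m)^2 * ↑(mu r)^(m*2)) *
    (((↑sx:ℂ)*↑sx + ↑cx*↑cx)^2 + ((↑sx:ℂ)*↑sx + ↑cx*↑cx) + 1)) * hsc
end

section
/- Componentwise eigenvector property of Z-R ordered vector coherent states (Section 4): suppose Z and all x_m (m ≥ 1) are invertible diagonal n×n complex matrices, set x_m! = x_m x_{m−1} ⋯ x_1 with x_0! = 𝟙_n, and assume N = Σ_{m=0}^∞ ‖Z^m x_m! χ^j‖² converges appropriately so that |Z,j⟩ = N^{-1/2} Σ_{m=0}^∞ Z^m x_m! χ^j ⊗ φ_m ∈ ℂ^n ⊗ 𝔥. Define A_k (k = 1,…,n) on ℂ^n ⊗ 𝔥 by A_k(v ⊗ φ_m) = (x_m)^{-1} E_k v ⊗ φ_{m−1} for m ≥ 1 and A_k(v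 ⊗ φ_0) = 0, where E_k is the elementary matrix with 1 in position (k,k) and 0 elsewhere. Then A_k |Z,j⟩ = δ_{kj} (Z ⊗ I) |Z,j⟩. -/
open scoped Matrix

section Aux
variable {n : ℕ}

lemma aux_mul_apply_diag_left {A B : Matrix (Fin n) (Fin n) ℂ} (hA : A.IsDiag)
    (i j : Fin n) : (A * B) i j = A i i * B i j := by
  rw [Matrix.mul_apply]
  rw [Finset.sum_eq_single i]
  · intro l _ hl
    rw [hA (Ne.symm hl), zero_mul]
  · intro h; exact absurd (Finset.mem_univ i) h

lemma aux_isDiag_mul {A B : Matrix (Fin n) (Fin n) ℂ} (hA : A.IsDiag) (hB : B.IsDiag) :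
    (A * B).IsDiag := by
  intro i j hij
  rw [aux_mul_apply_diag_left hA, hB hij, mul_zero]

lemma aux_isDiag_pow {A : Matrix (Fin n) (Fin n) ℂ} (hA : A.IsDiag) (m : ℕ) :
    (A ^ m).IsDiag := by
  induction m with
  | zero => simpa using Matrix.isDiag_one
  | succ m ih => rw [pow_succ]; exact aux_isDiag_mul ih hA

lemma aux_inv_isDiag {A : Matrix (Fin n) (Fin n) ℂ} (hA : A.IsDiag) :
    (A⁻¹).IsDiag := by
  rw [← hA.diagonal_diag, Matrix.inv_diagonal]
  exact Matrix.isDiag_diagonal _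

lemma aux_inv_mul_entry {A : Matrix (Fin n) (Fin n) ℂ} (hA : A.IsDiag) (hu : IsUnit A)
    (k : Fin n) : A⁻¹ k k * A k k = 1 := by
  have h := Matrix.nonsing_inv_mul A ((Matrix.isUnit_iff_isUnit_det A).mp hu)
  have h2 := congrFun (congrFun h k) k
  rw [aux_mul_apply_diag_left (aux_inv_isDiag hA)] at h2
  rw [h2, Matrix.one_apply_eq]

end Aux

/-- Section 4, componentwise eigenvector property: for diagonal invertible `Z` and `x_m`,
the Z-R ordered vector coherent states `|Z,j⟩ = N^{-1/2} Σ_m Z^m x_m! χ^j ⊗ φ_m`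
satisfy `A_k |Z,j⟩ = δ_{kj} (Z ⊗ I) |Z,j⟩`, where
`A_k (v ⊗ φ_m) = x_m⁻¹ E_k v ⊗ φ_{m-1}`. -/
theorem stmt_9 {n : ℕ} {H : Type*} [NormedAddCommGroup H] [InnerProductSpace ℂ H]
    [CompleteSpace H] (Φ : HilbertBasis (Fin n × ℕ) ℂ H)
    (Z : Matrix (Fin n) (Fin n) ℂ) (hZdiag : Z.IsDiag) (hZunit : IsUnit Z)
    (x : ℕ → Matrix (Fin n) (Fin n) ℂ)
    (hxdiag : ∀ m, 1 ≤ m → (x m).IsDiag) (hxunit : ∀ m, 1 ≤ m → IsUnit (x m))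
    (xf : ℕ → Matrix (Fin n) (Fin n) ℂ) (hxf0 : xf 0 = 1)
    (hxf : ∀ m : ℕ, xf (m + 1) = x (m + 1) * xf m)
    (N : ℝ) (hN : 0 < N)
    (hsum : ∀ j, Summable (fun p : Fin n × ℕ => ((Z ^ p.2 * xf p.2) p.1 j) • Φ p))
    (v : Fin n → H)
    (hv : ∀ j, v j = (((Real.sqrt N)⁻¹ : ℝ) : ℂ) •
      ∑' p : Fin n × ℕ, ((Z ^ p.2 * xf p.2) p.1 j) • Φ p)
    (A : Fin n → H →L[ℂ] H)
    (hA0 : ∀ k j : Fin n, A k (Φ (j, 0)) = 0)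
    (hA : ∀ (k : Fin n) (m : ℕ) (j : Fin n), A k (Φ (j, m + 1)) =
      ∑ i, (((x (m + 1))⁻¹ * (Matrix.single k k (1 : ℂ))) i j) • Φ (i, m))
    (ZI : H →L[ℂ] H)
    (hZI : ∀ (m : ℕ) (j : Fin n), ZI (Φ (j, m)) = ∑ i, (Z i j) • Φ (i, m))
    (k j : Fin n) :
    A k (v j) = (if k = j then (1 : ℂ) else 0) • ZI (v j) := by
  -- basic diagonal facts
  have hxfd : ∀ m, (xf m).IsDiag := by
    intro m
    induction m with
    | zero => rw [hxf0]; exact Matrix.isDiag_one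
    | succ m ih => rw [hxf]; exact aux_isDiag_mul (hxdiag (m+1) (Nat.le_add_left 1 m)) ih
  have hcoefd : ∀ m, (Z ^ m * xf m).IsDiag := fun m =>
    aux_isDiag_mul (aux_isDiag_pow hZdiag m) (hxfd m)
  -- entry of A k on basis vectors
  have hAk : ∀ (m : ℕ) (i : Fin n), A k (Φ (i, m + 1)) =
      if i = k then ((x (m+1))⁻¹ k k) • Φ (k, m) else (0 : H) := by
    intro m i
    have hxinv : ((x (m+1))⁻¹).IsDiag := aux_inv_isDiag (hxdiag (m+1) (Nat.le_add_left 1 m))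
    have hE : ∀ a b : Fin n, Matrix.single k k (1:ℂ) a b =
        if a = k ∧ b = k then 1 else 0 := by
      intro a b
      simp only [Matrix.single, Matrix.of_apply]
      by_cases h1 : a = k <;> by_cases h2 : b = k <;> simp [h1, h2] <;>
        simp [eq_comm] at * <;> tauto
    have hM : ∀ i' : Fin n, ((x (m + 1))⁻¹ * Matrix.single k k (1:ℂ)) i' i =
        if i' = k ∧ i = k then ((x (m+1))⁻¹ k k) else 0 := by
      intro i'
      rw [aux_mul_apply_diag_left hxinv, hE]
      by_cases h1 : i' = k ∧ i = k
      · rw [if_pos h1, if_pos h1, mul_one, h1.1]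
      · rw [if_neg h1, if_neg h1, mul_zero]
    rw [hA k m i]
    by_cases h2 : i = k
    · rw [if_pos h2]
      rw [Finset.sum_eq_single k]
      · rw [hM]; simp [h2]
      · intro l _ hl; rw [hM]; simp [hl]
      · intro h; exact absurd (Finset.mem_univ k) h
    · rw [if_neg h2]
      apply Finset.sum_eq_zero
      intro l _
      rw [hM]; simp [h2]
  -- ZI on basis vectors
  have hZIk : ∀ (m : ℕ) (i : Fin n), ZI (Φ (i, m)) = (Z i i) • Φ (i, m) := by
    intro m i
    rw [hZI m i, Finset.sum_eq_single i]
    · intro l _ hl; rw [hZdiag hl, zero_smul]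
    · intro h; exact absurd (Finset.mem_univ i) h
  -- expand v j and push A k / ZI through tsum
  rw [hv j, map_smul, map_smul, (A k).map_tsum (hsum j), ZI.map_tsum (hsum j)]
  by_cases hkj : k = j
  · subst hkj
    rw [if_pos rfl, one_smul]
    congr 1
    set f : Fin n × ℕ → H := fun p => A k (((Z ^ p.2 * xf p.2) p.1 k) • Φ p) with hf
    set g : Fin n × ℕ → H := fun p => ZI (((Z ^ p.2 * xf p.2) p.1 k) • Φ p) with hg
    have hΦne : ∀ p : Fin n × ℕ, Φ p ≠ 0 := fun p => Φ.orthonormal.ne_zero p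
    have hgval : ∀ p : Fin n × ℕ, g p = (Z p.1 p.1 * (Z ^ p.2 * xf p.2) p.1 k) • Φ p := by
      intro p
      simp only [hg, map_smul, hZIk p.2 p.1, smul_smul, mul_comm]
    have hfval : ∀ (m : ℕ) (i : Fin n), f (i, m + 1) =
        if i = k then ((Z ^ (m+1) * xf (m+1)) k k * ((x (m+1))⁻¹ k k)) • Φ (k, m) else 0 := by
      intro m i
      simp only [hf, map_smul, hAk m i]
      by_cases h2 : i = k
      · subst h2; rw [if_pos rfl, if_pos rfl, smul_smul]
      · rw [if_neg h2, if_neg h2, smul_zero]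
    have hstep : ∀ m : ℕ, (Z ^ (m+1) * xf (m+1)) k k * ((x (m+1))⁻¹ k k) =
        Z k k * (Z ^ m * xf m) k k := by
      intro m
      have h1 : ((x (m+1))⁻¹) k k * (x (m+1)) k k = 1 :=
        aux_inv_mul_entry (hxdiag (m+1) (Nat.le_add_left 1 m)) (hxunit (m+1) (Nat.le_add_left 1 m)) k
      have e1 : (Z ^ (m+1) * xf (m+1)) k k = (Z ^ (m+1)) k k * (xf (m+1)) k k :=
        aux_mul_apply_diag_left (aux_isDiag_pow hZdiag (m+1)) k k
      have e2 : (Z ^ (m+1)) k k = Z k k * (Z ^ m) k k := by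
        rw [pow_succ']
        exact aux_mul_apply_diag_left hZdiag k k
      have e3 : (xf (m+1)) k k = (x (m+1)) k k * (xf m) k k := by
        rw [hxf]
        exact aux_mul_apply_diag_left (hxdiag (m+1) (Nat.le_add_left 1 m)) k k
      have e4 : (Z ^ m * xf m) k k = (Z ^ m) k k * (xf m) k k :=
        aux_mul_apply_diag_left (aux_isDiag_pow hZdiag m) k k
      rw [e1, e2, e3, e4]
      linear_combination (Z k k * (Z ^ m) k k * (xf m) k k) * h1
    apply tsum_eq_tsum_of_ne_zero_bij (fun q => (q.1.1, q.1.2 + 1))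
    · intro q1 q2 h
      have h1 := congrArg Prod.fst h
      have h2 := congrArg Prod.snd h
      simp only at h1 h2
      exact Subtype.ext (Prod.ext h1 (Nat.succ_injective h2))
    · rintro ⟨i, m⟩ hp
      simp only [Function.mem_support] at hp
      match m with
      | 0 => exact absurd (by simp [hf, hA0]) hp
      | m + 1 =>
        have hp' : f (i, m + 1) ≠ 0 := hp
        have hik : i = k := by
          by_contra hik
          apply hp'
          rw [hfval m i, if_neg hik]
        subst hik
        rw [hfval m i, if_pos rfl, hstep m] at hp'
        have hne : Z i i * (Z ^ m * xf m) i i ≠ 0 := by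
          intro h0
          apply hp'; rw [h0, zero_smul]
        refine ⟨⟨(i, m), ?_⟩, rfl⟩
        rw [Function.mem_support]
        intro h0
        simp only [map_smul, hZIk, smul_smul] at h0
        rcases smul_eq_zero.mp h0 with h1 | h1
        · exact hne (by linear_combination h1)
        · exact hΦne _ h1
    · rintro ⟨⟨i, m⟩, hq⟩
      rw [Function.mem_support] at hq
      have hik : i = k := by
        by_contra hik
        apply hq
        show ZI _ = 0
        rw [hcoefd m (show i ≠ k from hik), zero_smul, map_zero]
      subst hik
      show f (i, m + 1) = g (i, m)
      rw [hfval m i, if_pos rfl, hstep m, hgval]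
  · rw [if_neg hkj, zero_smul]
    have hzero : ∀ p : Fin n × ℕ, A k (((Z ^ p.2 * xf p.2) p.1 j) • Φ p) = 0 := by
      rintro ⟨i, m⟩
      rw [map_smul]
      match m with
      | 0 => rw [hA0 k i, smul_zero]
      | m + 1 =>
        rw [hAk m i]
        by_cases h2 : i = k
        · rw [if_pos h2]
          have : (Z ^ (m+1) * xf (m+1)) i j = 0 := hcoefd (m+1) (h2 ▸ hkj)
          rw [this, zero_smul]
        · rw [if_neg h2, smul_zero]
    rw [tsum_congr hzero, tsum_zero, smul_zero]
end

section
/- Eigenvector property of Z-R ordered vector coherent states (Section 4): let Z and x_m (m ≥ 1) be invertible n×n complex matrices such that Z commutes with every x_m, set x_m! = x_m x_{m−1} ⋯ x_1 with x_0! = 𝟙_n, and assume the series |Z,j⟩ = N^{-1/2} Σ_{m=0}^∞ Z^m x_m! χ^j ⊗ φ_m converges in ℂ^n ⊗ 𝔥 (N a nonzero normalization constant). Define the annihilation operator A on ℂ^n ⊗ 𝔥 by A(v ⊗ φ_m) = (x_m)^{-1} v ⊗ φ_{m−1} for m ≥ 1 and A(v ⊗ φ_0) = 0. Then A |Z,j⟩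 = (Z ⊗ I) |Z,j⟩, i.e., the vector coherent states are eigenstates of the generalized annihilation operator with matrix eigenvalue Z. -/
open scoped Matrix

local notation "⟪" x ", " y "⟫" => @inner ℂ _ _ x y

/-- Section 4, eigenvector property: if `Z` commutes with every `x_m`, the Z-R ordered
vector coherent states `|Z,j⟩ = N^{-1/2} Σ_m Z^m x_m! χ^j ⊗ φ_m` are eigenstates of the
generalized annihilation operator `A (v ⊗ φ_m) = x_m⁻¹ v ⊗ φ_{m-1}` with matrix
eigenvalue `Z`:  `A |Z,j⟩ = (Z ⊗ I) |Z,j⟩`. -/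
theorem stmt_10 {n : ℕ} {H : Type*} [NormedAddCommGroup H] [InnerProductSpace ℂ H]
    [CompleteSpace H] (Φ : HilbertBasis (Fin n × ℕ) ℂ H)
    (Z : Matrix (Fin n) (Fin n) ℂ) (hZunit : IsUnit Z)
    (x : ℕ → Matrix (Fin n) (Fin n) ℂ) (hxunit : ∀ m, 1 ≤ m → IsUnit (x m))
    (hcomm : ∀ m, 1 ≤ m → Z * x m = x m * Z)
    (xf : ℕ → Matrix (Fin n) (Fin n) ℂ) (hxf0 : xf 0 = 1)
    (hxf : ∀ m : ℕ, xf (m + 1) = x (m + 1) * xf m)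
    (N : ℝ) (hN : 0 < N)
    (hsum : ∀ j, Summable (fun p : Fin n × ℕ => ((Z ^ p.2 * xf p.2) p.1 j) • Φ p))
    (v : Fin n → H)
    (hv : ∀ j, v j = (((Real.sqrt N)⁻¹ : ℝ) : ℂ) •
      ∑' p : Fin n × ℕ, ((Z ^ p.2 * xf p.2) p.1 j) • Φ p)
    (A : H →L[ℂ] H)
    (hA0 : ∀ j : Fin n, A (Φ (j, 0)) = 0)
    (hA : ∀ (m : ℕ) (j : Fin n), A (Φ (j, m + 1)) = ∑ i, ((x (m + 1))⁻¹ i j) • Φ (i, m))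
    (ZI : H →L[ℂ] H)
    (hZI : ∀ (m : ℕ) (j : Fin n), ZI (Φ (j, m)) = ∑ i, (Z i j) • Φ (i, m))
    (j : Fin n) :
    A (v j) = ZI (v j) := by
  classical
  -- inner product of a basis vector with a finite combination at level m
  have hinner : ∀ (q : Fin n × ℕ) (m : ℕ) (c : Fin n → ℂ),
      ⟪Φ q, ∑ i, c i • Φ (i, m)⟫ = if q.2 = m then c q.1 else 0 := by
    intro q m c
    rw [inner_sum]
    simp_rw [inner_smul_right, orthonormal_iff_ite.mp Φ.orthonormal]
    rcases q with ⟨k, mq⟩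
    by_cases h : mq = m
    · subst h
      simp [Prod.ext_iff, eq_comm]
    · simp [Prod.ext_iff, h]
  -- key matrix identity
  have key : ∀ m : ℕ, (x (m + 1))⁻¹ * (Z ^ (m + 1) * xf (m + 1)) = Z ^ (m + 1) * xf m := by
    intro m
    have hu : IsUnit (x (m + 1)).det :=
      (Matrix.isUnit_iff_isUnit_det _).mp (hxunit (m + 1) (Nat.le_add_left 1 m))
    have hc : Commute Z (x (m + 1)) := hcomm (m + 1) (Nat.le_add_left 1 m)
    calc (x (m + 1))⁻¹ * (Z ^ (m + 1) * xf (m + 1))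
        = (x (m + 1))⁻¹ * (Z ^ (m + 1) * (x (m + 1) * xf m)) := by rw [hxf]
      _ = (x (m + 1))⁻¹ * (x (m + 1) * (Z ^ (m + 1) * xf m)) := by
          rw [← mul_assoc (Z ^ (m + 1)), (hc.pow_left (m + 1)).eq, mul_assoc]
      _ = Z ^ (m + 1) * xf m := by
          rw [← mul_assoc, Matrix.nonsing_inv_mul _ hu, one_mul]
  -- reduce to equality of inner products with all basis vectors
  apply Φ.repr.injective
  ext q
  rw [Φ.repr_apply_apply, Φ.repr_apply_apply]
  obtain ⟨k, mq⟩ := q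
  -- general computation of ⟪Φ q, T (v j)⟫ as a tsum
  have main : ∀ T : H →L[ℂ] H,
      ⟪Φ (k, mq), T (v j)⟫ = (((Real.sqrt N)⁻¹ : ℝ) : ℂ) *
        ∑' p : Fin n × ℕ, ((Z ^ p.2 * xf p.2) p.1 j) * ⟪Φ (k, mq), T (Φ p)⟫ := by
    intro T
    rw [hv j, map_smul, inner_smul_right]
    congr 1
    have := ((innerSL ℂ (Φ (k, mq))).comp T).map_tsum (hsum j)
    simp only [ContinuousLinearMap.coe_comp', Function.comp_apply, innerSL_apply_apply,
      map_smul, inner_smul_right] at this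
    exact this
  rw [main A, main ZI]
  congr 1
  -- A side: support is the fiber over mq + 1
  have hAval : (∑' p : Fin n × ℕ, ((Z ^ p.2 * xf p.2) p.1 j) * ⟪Φ (k, mq), A (Φ p)⟫)
      = (Z ^ (mq + 1) * xf mq) k j := by
    rw [tsum_eq_sum (s := Finset.univ ×ˢ {mq + 1}) (f := fun p : Fin n × ℕ =>
      ((Z ^ p.2 * xf p.2) p.1 j) * ⟪Φ (k, mq), A (Φ p)⟫) ?_]
    · rw [Finset.sum_product]
      simp only [Finset.sum_singleton]
      have : ∀ i : Fin n, ((Z ^ (mq + 1) * xf (mq + 1)) i j) * ⟪Φ (k, mq), A (Φ (i, mq + 1))⟫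
          = ((x (mq + 1))⁻¹ k i) * ((Z ^ (mq + 1) * xf (mq + 1)) i j) := by
        intro i
        rw [hA, hinner]
        simp [mul_comm]
      simp_rw [this]
      rw [← Matrix.mul_apply, key]
    · intro p hp
      obtain ⟨i, m⟩ := p
      simp only [Finset.mem_product, Finset.mem_univ, Finset.mem_singleton, true_and] at hp
      cases m with
      | zero => simp [hA0]
      | succ m =>
        dsimp only
        rw [hA, hinner]
        have : mq ≠ m := fun h => hp (by omega)
        simp [this]
  have hZval : (∑' p : Fin n × ℕ, ((Z ^ p.2 * xf p.2) p.1 j) * ⟪Φ (k, mq), ZI (Φ p)⟫)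
      = (Z ^ (mq + 1) * xf mq) k j := by
    rw [tsum_eq_sum (s := Finset.univ ×ˢ {mq}) (f := fun p : Fin n × ℕ =>
      ((Z ^ p.2 * xf p.2) p.1 j) * ⟪Φ (k, mq), ZI (Φ p)⟫) ?_]
    · rw [Finset.sum_product]
      simp only [Finset.sum_singleton]
      have : ∀ i : Fin n, ((Z ^ mq * xf mq) i j) * ⟪Φ (k, mq), ZI (Φ (i, mq))⟫
          = (Z k i) * ((Z ^ mq * xf mq) i j) := by
        intro i
        rw [hZI, hinner]
        simp [mul_comm]
      simp_rw [this]
      rw [← Matrix.mul_apply, ← mul_assoc, ← pow_succ']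
    · intro p hp
      obtain ⟨i, m⟩ := p
      simp only [Finset.mem_product, Finset.mem_univ, Finset.mem_singleton, true_and] at hp
      dsimp only
      rw [hZI, hinner]
      simp [Ne.symm hp]
  rw [hAval, hZval]
end

section
/- Mean energy in the Jaynes-Cummings vector coherent states: let H_D be the (densely defined) diagonal operator determined by H_D(χ₁ ⊗ φ_n) = ω₊ n · χ₁ ⊗ φ_n and H_D(χ₂ ⊗ φ_n) = ω₋ n · χ₂ ⊗ φ_n. Then ⟨Z,1 | H_D | Z,1⟩ = r₁² G(r₁,r₂) and ⟨Z,2 | H_D | Z,2⟩ = r₂² 𝔊(r₁,r₂), where G(r₁,r₂) = e^{r₁²/ω₊} / (e^{r₁²/ω₊} + e^{r₂²/ω₋}) and 𝔊(r₁,r₂) = e^{r₂²/ω₋} / (e^{r₁²/ω₊} + e^{r₂²/ω₋}). -/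
open Real
open scoped ComplexInnerProductSpace

/-- Mean energy in the Jaynes–Cummings vector coherent states: with `H_D` the diagonal
operator `H_D(χ_j ⊗ φ_n) = ω_j n χ_j ⊗ φ_n` (encoded through the vectors `w j = H_D|Z,j⟩`,
characterized by their basis coefficients), one has `⟨Z,1|H_D|Z,1⟩ = r₁² G(r₁,r₂)` and
`⟨Z,2|H_D|Z,2⟩ = r₂² 𝔊(r₁,r₂)`. -/
theorem stmt_16 {H : Type*} [NormedAddCommGroup H] [InnerProductSpace ℂ H]
    [CompleteSpace H] (Φ : HilbertBasis (Fin 2 × ℕ) ℂ H)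
    (ω r θ : Fin 2 → ℝ) (hω : ∀ j, 0 < ω j) (hr : ∀ j, 0 ≤ r j)
    (z : Fin 2 → ℂ) (hz : ∀ j, z j = (r j : ℂ) * Complex.exp ((θ j : ℂ) * Complex.I))
    (ρ : Fin 2 → ℕ → ℝ) (hρ : ∀ j n, ρ j n = (ω j) ^ n * (Nat.factorial n : ℝ))
    (N : ℝ) (hN : N = Real.exp ((r 0) ^ 2 / ω 0) + Real.exp ((r 1) ^ 2 / ω 1))
    (G Gg : ℝ) (hG : G = Real.exp ((r 0) ^ 2 / ω 0) / N)
    (hGg : Gg = Real.exp ((r 1) ^ 2 / ω 1) / N)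
    (v : Fin 2 → H)
    (hv : ∀ j, v j = (((Real.sqrt N)⁻¹ : ℝ) : ℂ) •
      ∑' n : ℕ, ((z j) ^ n / ((Real.sqrt (ρ j n) : ℝ) : ℂ)) • Φ (j, n))
    (w : Fin 2 → H)
    (hw : ∀ (j i : Fin 2) (n : ℕ),
      ⟪Φ (i, n), w j⟫ = ((ω i * n : ℝ) : ℂ) * ⟪Φ (i, n), v j⟫) :
    ⟪v 0, w 0⟫ = (((r 0) ^ 2 * G : ℝ) : ℂ) ∧
    ⟪v 1, w 1⟫ = (((r 1) ^ 2 * Gg : ℝ) : ℂ) := by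
  classical
  have hNpos : 0 < N := by
    rw [hN]; positivity
  have hρpos : ∀ j n, 0 < ρ j n := fun j n => by
    rw [hρ]
    exact mul_pos (pow_pos (hω j) n) (by exact_mod_cast Nat.factorial_pos n)
  have hrabs : ∀ j, ‖z j‖ = r j := fun j => by
    rw [hz j, norm_mul, Complex.norm_real, Real.norm_eq_abs, abs_of_nonneg (hr j), Complex.norm_exp]
    simp
  have key : ∀ j, ⟪v j, w j⟫ = ((r j ^ 2 * Real.exp (r j ^ 2 / ω j) / N : ℝ) : ℂ) := by
    intro j
    set a : ℕ → ℂ := fun n => (z j) ^ n / ((Real.sqrt (ρ j n) : ℝ) : ℂ) with ha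
    have hsq : ∀ n, ‖a n‖ ^ 2 = r j ^ (2 * n) / ρ j n := by
      intro n
      have h1 : ‖a n‖ = r j ^ n / Real.sqrt (ρ j n) := by
        simp only [ha, norm_div, norm_pow, hrabs j, Complex.norm_real, Real.norm_eq_abs,
          abs_of_nonneg (Real.sqrt_nonneg _)]
      rw [h1, div_pow, ← pow_mul, mul_comm n 2, Real.sq_sqrt (hρpos j n).le]
    have hterm : ∀ n : ℕ, (r j ^ 2 / ω j) ^ n / (Nat.factorial n : ℝ) = ‖a n‖ ^ 2 := by
      intro n
      rw [hsq n, hρ, pow_mul, div_pow, div_div]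
    have hsum2 : Summable fun n => ‖a n‖ ^ 2 :=
      (NormedSpace.expSeries_div_summable (r j ^ 2 / ω j)).congr hterm
    have hinj : Function.Injective (fun n : ℕ => ((j, n) : Fin 2 × ℕ)) := by
      intro m n h
      simpa using h
    have hOF := (Φ.orthonormal.orthogonalFamily).comp hinj
    have hsumv : Summable (fun n => a n • Φ (j, n)) := by
      have h2 := (hOF.summable_iff_norm_sq_summable a).mpr hsum2
      refine h2.congr fun n => ?_
      simp [LinearIsometry.toSpanSingleton_apply]
    set S : H := ∑' n, a n • Φ (j, n) with hS
    have hSsum : HasSum (fun n => a n • Φ (j, n)) S := hsumv.hasSum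
    have coeffS : ∀ p : Fin 2 × ℕ, ⟪Φ p, S⟫ = if p.1 = j then a p.2 else 0 := by
      intro p
      have h1 : HasSum (fun n => ⟪Φ p, a n • Φ (j, n)⟫) ⟪Φ p, S⟫ := by
        simpa only [innerSL_apply_apply] using hSsum.mapL (innerSL ℂ (Φ p))
      have h2 : ∀ n, ⟪Φ p, a n • Φ (j, n)⟫ = if p = (j, n) then a n else 0 := by
        intro n
        rw [inner_smul_right, orthonormal_iff_ite.mp Φ.orthonormal p (j, n)]
        by_cases h : p = (j, n) <;> simp [h]
      obtain ⟨i, m⟩ := p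
      by_cases hij : i = j
      · subst hij
        have h3 : (fun n => if ((i : Fin 2), m) = (i, n) then a n else 0) =
            fun n => if n = m then a m else 0 := by
          funext n
          by_cases h : n = m
          · subst h; simp
          · rw [if_neg (by simpa [Prod.ext_iff] using fun hh : m = n => h hh.symm), if_neg h]
        have h4 : HasSum (fun n => ⟪Φ (i, m), a n • Φ (i, n)⟫) (a m) := by
          rw [funext h2, h3]
          exact hasSum_ite_eq m (a m)
        simpa using h1.unique h4
      · have h4 : HasSum (fun n => ⟪Φ (i, m), a n • Φ (j, n)⟫) 0 := by
          rw [funext h2]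
          convert hasSum_zero with n
          simp [Prod.ext_iff, hij]
        simpa [hij] using h1.unique h4
    have coeff : ∀ p : Fin 2 × ℕ, ⟪Φ p, v j⟫ =
        if p.1 = j then (((Real.sqrt N)⁻¹ : ℝ) : ℂ) * a p.2 else 0 := by
      intro p
      rw [hv j, inner_smul_right, ← hS]
      rw [coeffS p]
      by_cases h : p.1 = j <;> simp [h, Complex.conj_ofReal]
    set g : ℕ → ℝ := fun n => (ω j * n) * (r j ^ (2 * n) / ρ j n) / N with hg
    have hterm2 : ∀ n : ℕ, ⟪v j, Φ (j, n)⟫ * ⟪Φ (j, n), w j⟫ = ((g n : ℝ) : ℂ) := by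
      intro n
      rw [← inner_conj_symm (v j) (Φ (j, n)), hw j j n, coeff (j, n),
        if_pos (show ((j, n) : Fin 2 × ℕ).1 = j from rfl)]
      set c : ℂ := (((Real.sqrt N)⁻¹ : ℝ) : ℂ) * a n with hc
      have h5 : (starRingEnd ℂ) c * (((ω j * n : ℝ) : ℂ) * c) =
          ((ω j * n : ℝ) : ℂ) * (c * (starRingEnd ℂ) c) := by ring
      rw [h5, Complex.mul_conj']
      have hcn : ‖c‖ ^ 2 = r j ^ (2 * n) / ρ j n / N := by
        rw [hc, norm_mul, mul_pow, hsq n, Complex.norm_real,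
          Real.norm_eq_abs, abs_of_nonneg (by positivity), inv_pow,
          Real.sq_sqrt hNpos.le]
        rw [inv_mul_eq_div]
      rw [← Complex.ofReal_pow, hcn, hg]
      push_cast
      ring
    have hgsum : HasSum g (r j ^ 2 * Real.exp (r j ^ 2 / ω j) / N) := by
      have he : HasSum (fun n : ℕ => (r j ^ 2 / ω j) ^ n / (Nat.factorial n : ℝ))
          (Real.exp (r j ^ 2 / ω j)) := by
        rw [Real.exp_eq_exp_ℝ]
        exact NormedSpace.expSeries_div_hasSum_exp _
      have h1 := he.mul_left (r j ^ 2 / N)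
      have h0 : HasSum (fun n => g (n + 1)) (r j ^ 2 * Real.exp (r j ^ 2 / ω j) / N) := by
        have heq : ∀ n : ℕ, g (n + 1) =
            r j ^ 2 / N * ((r j ^ 2 / ω j) ^ n / (Nat.factorial n : ℝ)) := by
          intro n
          have hfs : ((n + 1).factorial : ℝ) = (n + 1) * (Nat.factorial n : ℝ) := by
            exact_mod_cast Nat.factorial_succ n
          have hωn : (ω j : ℝ) ≠ 0 := (hω j).ne'
          have hfn : (Nat.factorial n : ℝ) ≠ 0 := by
            exact_mod_cast (Nat.factorial_pos n).ne'
          simp only [hg, hρ, hfs]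
          have hNn : N ≠ 0 := hNpos.ne'
          rw [div_pow]
          field_simp
          push_cast
          ring
        have h6 : HasSum (fun n => g (n + 1)) (r j ^ 2 / N * Real.exp (r j ^ 2 / ω j)) :=
          h1.congr_fun heq
        convert h6 using 1
        ring
      have h7 := (hasSum_nat_add_iff (f := g) 1).mp h0
      have hg0 : g 0 = 0 := by simp [hg]
      simpa [hg0] using h7
    have hmain : HasSum (fun p : Fin 2 × ℕ => ⟪v j, Φ p⟫ * ⟪Φ p, w j⟫) ⟪v j, w j⟫ :=
      Φ.hasSum_inner_mul_inner (v j) (w j)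
    have hvanish : ∀ p : Fin 2 × ℕ, p ∉ Set.range (fun n : ℕ => ((j, n) : Fin 2 × ℕ)) →
        ⟪v j, Φ p⟫ * ⟪Φ p, w j⟫ = 0 := by
      rintro ⟨i, m⟩ hp
      have hij : i ≠ j := by
        intro h
        exact hp ⟨m, by simp [h]⟩
      have h8 : ⟪Φ (i, m), v j⟫ = 0 := by
        rw [coeff (i, m)]
        simp [hij]
      rw [hw j i m, h8, mul_zero, mul_zero]
    have hfiber : HasSum (fun n : ℕ => ⟪v j, Φ (j, n)⟫ * ⟪Φ (j, n), w j⟫) ⟪v j, w j⟫ :=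
      (hinj.hasSum_iff hvanish).mpr hmain
    have hfiber' : HasSum (fun n : ℕ => ((g n : ℝ) : ℂ)) ⟪v j, w j⟫ :=
      hfiber.congr_fun fun n => (hterm2 n).symm
    have hcomplex : HasSum (fun n : ℕ => ((g n : ℝ) : ℂ))
        ((r j ^ 2 * Real.exp (r j ^ 2 / ω j) / N : ℝ) : ℂ) := by
      simpa using hgsum.mapL Complex.ofRealCLM
    exact hfiber'.unique hcomplex
  constructor
  · rw [key 0, hG]
    norm_cast
    rw [mul_div_assoc]
  · rw [key 1, hGg]
    norm_cast
    rw [mul_div_assoc]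
end

section
/- Second moment, dispersion and Mandel parameter of the energy in the Jaynes-Cummings vector coherent states: with H_D as above, ⟨Z,1 | H_D² | Z,1⟩ = r₁² (r₁² + ω₊) G(r₁,r₂) and ⟨Z,2 | H_D² | Z,2⟩ = r₂² (r₂² + ω₋) 𝔊(r₁,r₂); consequently the dispersion is (ΔH_D)²_{|Z,1⟩} = r₁⁴ G(r₁,r₂)𝔊(r₁,r₂) + ω₊ r₁² G(r₁,r₂), and the Mandel parameter Q^M_{|Z,1⟩} = (ΔH_D)²_{|Z,1⟩}/⟨H_D⟩_{|Z,1⟩} − 1 equals r₁² 𝔊(r₁,r₂) + ω₊ − 1 (for r₁ > 0). -/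
open Real
open scoped ComplexInnerProductSpace

lemma hs_exp (x : ℝ) : HasSum (fun n : ℕ => x ^ n / n.factorial) (Real.exp x) := by
  rw [Real.exp_eq_exp_ℝ]
  exact NormedSpace.expSeries_div_hasSum_exp x

lemma hs_n_exp (x : ℝ) : HasSum (fun n : ℕ => (n : ℝ) * (x ^ n / n.factorial)) (x * Real.exp x) := by
  have h0 : HasSum (fun n : ℕ => ((n + 1 : ℕ) : ℝ) * (x ^ (n + 1) / (n + 1).factorial))
      (x * Real.exp x) := by
    have h := (hs_exp x).mul_left x
    convert h using 2 with n
    case e'_3 => rfl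
    rw [Nat.factorial_succ]
    have h1 : ((n + 1 : ℕ) : ℝ) ≠ 0 := by positivity
    have h2 : (n.factorial : ℝ) ≠ 0 := by positivity
    push_cast
    field_simp
    ring
  have := (hasSum_nat_add_iff' (f := fun n : ℕ => (n : ℝ) * (x ^ n / n.factorial)) 1).mp
    (by simpa using h0)
  simpa using this

lemma hs_n2_exp (x : ℝ) : HasSum (fun n : ℕ => ((n : ℝ)) ^ 2 * (x ^ n / n.factorial))
    ((x ^ 2 + x) * Real.exp x) := by
  have h0 : HasSum (fun n : ℕ => (((n + 1 : ℕ) : ℝ)) ^ 2 * (x ^ (n + 1) / (n + 1).factorial))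
      ((x ^ 2 + x) * Real.exp x) := by
    have h := ((hs_n_exp x).mul_left x).add ((hs_exp x).mul_left x)
    have hval : x * (x * Real.exp x) + x * Real.exp x = (x ^ 2 + x) * Real.exp x := by ring
    rw [hval] at h
    convert h using 2 with n
    case e'_3 => rfl
    rw [Nat.factorial_succ]
    have h1 : ((n + 1 : ℕ) : ℝ) ≠ 0 := by positivity
    have h2 : (n.factorial : ℝ) ≠ 0 := by positivity
    push_cast
    field_simp
    ring
  have := (hasSum_nat_add_iff' (f := fun n : ℕ => ((n : ℝ)) ^ 2 * (x ^ n / n.factorial)) 1).mp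
    (by simpa using h0)
  simpa using this

/-- Second moment, dispersion and Mandel parameter of the energy in the Jaynes–Cummings
vector coherent states: `⟨Z,1|H_D²|Z,1⟩ = r₁²(r₁² + ω₊)G`,
`⟨Z,2|H_D²|Z,2⟩ = r₂²(r₂² + ω₋)𝔊`, `(ΔH_D)²_{|Z,1⟩} = r₁⁴ G𝔊 + ω₊ r₁² G`, and for
`r₁ > 0` the Mandel parameter is `Q^M_{|Z,1⟩} = r₁² 𝔊 + ω₊ − 1`.  Here `w j` and `w2 j`
encode `H_D|Z,j⟩` and `H_D²|Z,j⟩` through their basis coefficients. -/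
theorem stmt_17 {H : Type*} [NormedAddCommGroup H] [InnerProductSpace ℂ H]
    [CompleteSpace H] (Φ : HilbertBasis (Fin 2 × ℕ) ℂ H)
    (ω r θ : Fin 2 → ℝ) (hω : ∀ j, 0 < ω j) (hr : ∀ j, 0 ≤ r j)
    (z : Fin 2 → ℂ) (hz : ∀ j, z j = (r j : ℂ) * Complex.exp ((θ j : ℂ) * Complex.I))
    (ρ : Fin 2 → ℕ → ℝ) (hρ : ∀ j n, ρ j n = (ω j) ^ n * (Nat.factorial n : ℝ))
    (N : ℝ) (hN : N = Real.exp ((r 0) ^ 2 / ω 0) + Real.exp ((r 1) ^ 2 / ω 1))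
    (G Gg : ℝ) (hG : G = Real.exp ((r 0) ^ 2 / ω 0) / N)
    (hGg : Gg = Real.exp ((r 1) ^ 2 / ω 1) / N)
    (v : Fin 2 → H)
    (hv : ∀ j, v j = (((Real.sqrt N)⁻¹ : ℝ) : ℂ) •
      ∑' n : ℕ, ((z j) ^ n / ((Real.sqrt (ρ j n) : ℝ) : ℂ)) • Φ (j, n))
    (w w2 : Fin 2 → H)
    (hw : ∀ (j i : Fin 2) (n : ℕ),
      ⟪Φ (i, n), w j⟫ = ((ω i * n : ℝ) : ℂ) * ⟪Φ (i, n), v j⟫)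
    (hw2 : ∀ (j i : Fin 2) (n : ℕ),
      ⟪Φ (i, n), w2 j⟫ = (((ω i * n) ^ 2 : ℝ) : ℂ) * ⟪Φ (i, n), v j⟫) :
    ⟪v 0, w2 0⟫ = (((r 0) ^ 2 * ((r 0) ^ 2 + ω 0) * G : ℝ) : ℂ) ∧
    ⟪v 1, w2 1⟫ = (((r 1) ^ 2 * ((r 1) ^ 2 + ω 1) * Gg : ℝ) : ℂ) ∧
    ⟪v 0, w2 0⟫ - ⟪v 0, w 0⟫ ^ 2 =
      (((r 0) ^ 4 * G * Gg + ω 0 * (r 0) ^ 2 * G : ℝ) : ℂ) ∧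
    (0 < r 0 →
      (⟪v 0, w2 0⟫ - ⟪v 0, w 0⟫ ^ 2) / ⟪v 0, w 0⟫ - 1 =
        (((r 0) ^ 2 * Gg + ω 0 - 1 : ℝ) : ℂ)) := by
  classical
  set x : Fin 2 → ℝ := fun j => r j ^ 2 / ω j with hxdef
  have hNpos : 0 < N := by rw [hN]; positivity
  have hρpos : ∀ j n, 0 < ρ j n := fun j n => by
    have hωj := hω j
    rw [hρ]; positivity
  have habsz : ∀ j, ‖z j‖ = r j := by
    intro j
    rw [hz j, norm_mul, Complex.norm_real, Complex.norm_exp_ofReal_mul_I, mul_one,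
      Real.norm_eq_abs, abs_of_nonneg (hr j)]
  set c : ℂ := (((Real.sqrt N)⁻¹ : ℝ) : ℂ) with hcdef
  set a : Fin 2 → ℕ → ℂ := fun j n => (z j) ^ n / ((Real.sqrt (ρ j n) : ℝ) : ℂ) with hadef
  have hnorm_a : ∀ j n, ‖a j n‖ ^ 2 = x j ^ n / n.factorial := by
    intro j n
    have h1 : ‖a j n‖ = r j ^ n / Real.sqrt (ρ j n) := by
      rw [hadef]
      simp only [norm_div, norm_pow, habsz, Complex.norm_real, Real.norm_eq_abs,
        abs_of_nonneg (Real.sqrt_nonneg _)]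
    rw [h1, div_pow, Real.sq_sqrt (hρpos j n).le, hρ, hxdef]
    have hωj := hω j
    have hωn : (ω j) ^ n ≠ 0 := by positivity
    have hfn : (n.factorial : ℝ) ≠ 0 := by positivity
    field_simp
    ring_nf
    rw [inv_pow, mul_assoc, mul_inv_cancel₀ hωn, mul_one]
  have hsummable : ∀ j, Summable (fun n : ℕ => a j n • Φ (j, n)) := by
    intro j
    have hinj : Function.Injective (fun n : ℕ => ((j, n) : Fin 2 × ℕ)) := by
      intro m n h
      simpa using h
    have hON : Orthonormal ℂ (fun n : ℕ => Φ (j, n)) := Φ.orthonormal.comp _ hinj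
    have hiff := hON.orthogonalFamily.summable_iff_norm_sq_summable (fun n => a j n)
    have hs2 : Summable (fun n : ℕ => ‖a j n‖ ^ 2) := by
      have := (hs_exp (x j)).summable
      exact this.congr fun n => (hnorm_a j n).symm
    have := hiff.mpr hs2
    simpa [LinearIsometry.toSpanSingleton_apply] using this
  have horth := orthonormal_iff_ite.mp Φ.orthonormal
  have hcoef : ∀ (j i : Fin 2) (n : ℕ), ⟪Φ (i, n), v j⟫ =
      if i = j then c * a j n else 0 := by
    intro j i n
    rw [hv j, inner_smul_right]
    have hmap : ⟪Φ (i, n), ∑' m : ℕ, a j m • Φ (j, m)⟫ =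
        ∑' m : ℕ, a j m * ⟪Φ (i, n), Φ (j, m)⟫ := by
      have h0 : ⟪Φ (i, n), ∑' m : ℕ, a j m • Φ (j, m)⟫ =
          innerSL ℂ (Φ (i, n)) (∑' m : ℕ, a j m • Φ (j, m)) := rfl
      rw [h0, ContinuousLinearMap.map_tsum _ (hsummable j)]
      simp [inner_smul_right]
    rw [hmap]
    by_cases hij : i = j
    · subst hij
      rw [if_pos rfl]
      have hterm : ∀ m : ℕ, a i m * ⟪Φ (i, n), Φ (i, m)⟫ = if m = n then a i n else 0 := by
        intro m
        rw [horth]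
        by_cases h : m = n
        · subst h; simp
        · simp [h, Prod.ext_iff, Ne.symm h]
      rw [tsum_congr hterm, tsum_ite_eq]
    · rw [if_neg hij]
      have hterm : ∀ m : ℕ, a j m * ⟪Φ (i, n), Φ (j, m)⟫ = 0 := by
        intro m
        rw [horth]
        simp [Prod.ext_iff, hij]
      rw [tsum_congr hterm]
      simp
  have hccmul : ∀ (wz : ℂ), (starRingEnd ℂ) wz * wz = ((‖wz‖ ^ 2 : ℝ) : ℂ) := by
    intro wz
    rw [RCLike.conj_mul]
    norm_cast
  have hnormca : ∀ j n, ‖c * a j n‖ ^ 2 = N⁻¹ * (x j ^ n / n.factorial) := by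
    intro j n
    rw [norm_mul, mul_pow, hnorm_a]
    congr 1
    rw [hcdef]
    simp only [Complex.norm_real, Real.norm_eq_abs, abs_of_nonneg
      (inv_nonneg.mpr (Real.sqrt_nonneg N))]
    rw [inv_pow, Real.sq_sqrt hNpos.le]
  have key : ∀ (j : Fin 2) (u : H) (F : Fin 2 → ℕ → ℝ),
      (∀ i n, ⟪Φ (i, n), u⟫ = ((F i n : ℝ) : ℂ) * ⟪Φ (i, n), v j⟫) →
      ∀ (S : ℝ), HasSum (fun n : ℕ => F j n * (x j ^ n / n.factorial)) S →
      ⟪v j, u⟫ = ((N⁻¹ * S : ℝ) : ℂ) := by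
    intro j u F hF S hS
    have h1 := Φ.tsum_inner_mul_inner (v j) u
    rw [← h1]
    have hterm : ∀ p : Fin 2 × ℕ, ⟪v j, Φ p⟫ * ⟪Φ p, u⟫ =
        if p.1 = j then ((N⁻¹ * (F j p.2 * (x j ^ p.2 / p.2.factorial)) : ℝ) : ℂ) else 0 := by
      rintro ⟨i, n⟩
      rw [← inner_conj_symm, hF i n, hcoef j i n]
      by_cases hij : i = j
      · subst hij
        simp only [eq_self_iff_true, if_true]
        rw [mul_comm ((F i n : ℝ) : ℂ), ← mul_assoc, hccmul, hnormca]
        push_cast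
        ring
      · simp [hij]
    have hsumm0 : Summable fun p : Fin 2 × ℕ => ⟪v j, Φ p⟫ * ⟪Φ p, u⟫ :=
      Φ.summable_inner_mul_inner (v j) u
    have hsumm : Summable fun p : Fin 2 × ℕ =>
        if p.1 = j then ((N⁻¹ * (F j p.2 * (x j ^ p.2 / p.2.factorial)) : ℝ) : ℂ) else 0 :=
      hsumm0.congr hterm
    have hfibsum : ∀ b : Fin 2, Summable fun n : ℕ =>
        if b = j then ((N⁻¹ * (F j n * (x j ^ n / n.factorial)) : ℝ) : ℂ) else 0 := by
      intro b
      by_cases h : b = j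
      · simp only [h, eq_self_iff_true, if_true]
        exact Complex.summable_ofReal.mpr (hS.mul_left N⁻¹).summable
      · simp only [if_neg h]
        exact summable_zero
    rw [tsum_congr hterm, Summable.tsum_prod' hsumm hfibsum]
    have hfib : ∀ b : Fin 2, (∑' n : ℕ,
        if b = j then ((N⁻¹ * (F j n * (x j ^ n / n.factorial)) : ℝ) : ℂ) else 0) =
        if b = j then ((N⁻¹ * S : ℝ) : ℂ) else 0 := by
      intro b
      by_cases h : b = j
      · simp only [h, eq_self_iff_true, if_true]
        rw [← Complex.ofReal_tsum, (hS.mul_left N⁻¹).tsum_eq]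
      · simp [h]
    rw [tsum_congr hfib, tsum_fintype]
    simp
  have hS2 : ∀ j, HasSum (fun n : ℕ => ((ω j * n) ^ 2) * (x j ^ n / n.factorial))
      ((r j ^ 2 * (r j ^ 2 + ω j)) * Real.exp (x j)) := by
    intro j
    have h := (hs_n2_exp (x j)).mul_left ((ω j) ^ 2)
    have hval : (ω j) ^ 2 * ((x j ^ 2 + x j) * Real.exp (x j)) =
        (r j ^ 2 * (r j ^ 2 + ω j)) * Real.exp (x j) := by
      have hωj := (hω j).ne'
      simp only [hxdef]
      field_simp
    rw [hval] at h
    convert h using 2 with n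
    case e'_3 => rfl
    push_cast
    ring
  have hS1 : ∀ j, HasSum (fun n : ℕ => (ω j * n) * (x j ^ n / n.factorial))
      (r j ^ 2 * Real.exp (x j)) := by
    intro j
    have h := (hs_n_exp (x j)).mul_left (ω j)
    have hval : ω j * (x j * Real.exp (x j)) = r j ^ 2 * Real.exp (x j) := by
      have hωj := (hω j).ne'
      simp only [hxdef]
      field_simp
    rw [hval] at h
    convert h using 2 with n
    case e'_3 => rfl
    push_cast
    ring
  have hw2val : ∀ j, ⟪v j, w2 j⟫ =
      ((N⁻¹ * ((r j ^ 2 * (r j ^ 2 + ω j)) * Real.exp (x j)) : ℝ) : ℂ) :=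
    fun j => key j (w2 j) (fun i n => (ω i * n) ^ 2) (hw2 j) _ (hS2 j)
  have hwval : ∀ j, ⟪v j, w j⟫ = ((N⁻¹ * (r j ^ 2 * Real.exp (x j)) : ℝ) : ℂ) :=
    fun j => key j (w j) (fun i n => ω i * n) (hw j) _ (hS1 j)
  have hGadd : G + Gg = 1 := by
    rw [hG, hGg, ← add_div, ← hN, div_self hNpos.ne']
  have e2 : N⁻¹ * ((r 0 ^ 2 * (r 0 ^ 2 + ω 0)) * Real.exp (x 0)) =
      r 0 ^ 2 * (r 0 ^ 2 + ω 0) * G := by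
    rw [hG]; simp only [hxdef]; ring
  have e2' : N⁻¹ * ((r 1 ^ 2 * (r 1 ^ 2 + ω 1)) * Real.exp (x 1)) =
      r 1 ^ 2 * (r 1 ^ 2 + ω 1) * Gg := by
    rw [hGg]; simp only [hxdef]; ring
  have e1 : N⁻¹ * (r 0 ^ 2 * Real.exp (x 0)) = r 0 ^ 2 * G := by
    rw [hG]; simp only [hxdef]; ring
  have part1 : ⟪v 0, w2 0⟫ = (((r 0) ^ 2 * ((r 0) ^ 2 + ω 0) * G : ℝ) : ℂ) := by
    rw [hw2val 0]
    exact_mod_cast congrArg (Complex.ofReal) e2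
  have part2 : ⟪v 1, w2 1⟫ = (((r 1) ^ 2 * ((r 1) ^ 2 + ω 1) * Gg : ℝ) : ℂ) := by
    rw [hw2val 1]
    exact_mod_cast congrArg (Complex.ofReal) e2'
  have hB : ⟪v 0, w 0⟫ = ((r 0 ^ 2 * G : ℝ) : ℂ) := by
    rw [hwval 0]
    exact_mod_cast congrArg (Complex.ofReal) e1
  have part3 : ⟪v 0, w2 0⟫ - ⟪v 0, w 0⟫ ^ 2 =
      (((r 0) ^ 4 * G * Gg + ω 0 * (r 0) ^ 2 * G : ℝ) : ℂ) := by
    rw [part1, hB, ← Complex.ofReal_pow, ← Complex.ofReal_sub]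
    congr 1
    linear_combination (-(r 0 ^ 4 * G)) * hGadd
  refine ⟨part1, part2, part3, fun hr0 => ?_⟩
  have hGpos : 0 < G := by rw [hG]; positivity
  have hBne : (r 0 ^ 2 * G : ℝ) ≠ 0 := by positivity
  rw [part3, hB, ← Complex.ofReal_div]
  have hreal : (r 0 ^ 4 * G * Gg + ω 0 * r 0 ^ 2 * G) / (r 0 ^ 2 * G) =
      r 0 ^ 2 * Gg + ω 0 := by
    field_simp
  rw [hreal]
  push_cast
  ring
end

section
/- Dispersion of the quadrature operator in the Jaynes-Cummings vector coherent states: let A be the operator determined by A(χ₁ ⊗ φ_n) = √(ω₊ n) χ₁ ⊗ φ_{n−1}, A(χ₂ ⊗ φ_n) = √(ω₋ n) χ₂ ⊗ φ_{n−1} (with A(χ_j ⊗ φ_0) = 0), let A† be its adjoint (A†(χ₁ ⊗ φ_n) = √(ω₊(n+1)) χ₁ ⊗ φ_{n+1}, A†(χ₂ ⊗ φ_n) = √(ω₋(n+1)) χ₂ ⊗ φ_{n+1}), and let Q = (A + A†)/√2. Then (ΔQ)²_{|Z,1⟩} = 2 r₁² cos²θ₁ · G(r₁,r₂) 𝔊(r₁,r₂)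 + (ω₊/2) G(r₁,r₂), and (ΔQ)²_{|Z,2⟩} = 2 r₂² cos²θ₂ · G(r₁,r₂) 𝔊(r₁,r₂) + (ω₋/2) 𝔊(r₁,r₂). -/
open Real
open scoped ComplexInnerProductSpace

private lemma tsum_exp' (s : ℝ) : ∑' n : ℕ, s ^ n / (Nat.factorial n : ℝ) = Real.exp s := by
  rw [Real.exp_eq_exp_ℝ, NormedSpace.exp_eq_tsum_div]

private lemma sqrt_le_half_add (x y : ℝ) (hx : 0 ≤ x) (hy : 0 ≤ y) :
    Real.sqrt (x * y) ≤ (x + y) / 2 := by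
  have h : x * y ≤ ((x + y) / 2) ^ 2 := by nlinarith [sq_nonneg (x - y)]
  calc Real.sqrt (x * y) ≤ Real.sqrt (((x + y) / 2) ^ 2) := Real.sqrt_le_sqrt h
    _ = (x + y) / 2 := Real.sqrt_sq (by positivity)

private lemma summable_sqrt_pow_div_factorial (s : ℝ) (hs : 0 ≤ s) :
    Summable fun n : ℕ => Real.sqrt (s ^ n / (Nat.factorial n : ℝ)) := by
  have hbound : ∀ n : ℕ, Real.sqrt (s ^ n / (Nat.factorial n : ℝ)) ≤
      ((2 * s) ^ n / (Nat.factorial n : ℝ) + (1 / 2) ^ n) / 2 := by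
    intro n
    have hfac : (0:ℝ) < (Nat.factorial n : ℝ) := by positivity
    have h1 : s ^ n / (Nat.factorial n : ℝ) =
        ((2 * s) ^ n / (Nat.factorial n : ℝ)) * ((1 / 2 : ℝ) ^ n) := by
      rw [mul_pow]
      field_simp
      rw [mul_assoc, ← mul_pow]; norm_num
    rw [h1]
    exact sqrt_le_half_add _ _ (by positivity) (by positivity)
  have hsum : Summable fun n : ℕ => ((2 * s) ^ n / (Nat.factorial n : ℝ) + (1 / 2 : ℝ) ^ n) / 2 :=
    ((Real.summable_pow_div_factorial (2 * s)).add
      (summable_geometric_of_lt_one (by norm_num) (by norm_num))).div_const 2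
  exact hsum.of_nonneg_of_le (fun n => Real.sqrt_nonneg _) hbound

private lemma key_lemma {H : Type*} [NormedAddCommGroup H] [InnerProductSpace ℂ H]
    [CompleteSpace H] (Φ : HilbertBasis (Fin 2 × ℕ) ℂ H)
    (ω r θ : Fin 2 → ℝ) (hω : ∀ j, 0 < ω j) (hr : ∀ j, 0 ≤ r j)
    (z : Fin 2 → ℂ) (hz : ∀ j, z j = (r j : ℂ) * Complex.exp ((θ j : ℂ) * Complex.I))
    (ρ : Fin 2 → ℕ → ℝ) (hρ : ∀ j n, ρ j n = (ω j) ^ n * (Nat.factorial n : ℝ))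
    (N : ℝ) (hN0 : 0 < N)
    (v : Fin 2 → H)
    (hv : ∀ j, v j = (((Real.sqrt N)⁻¹ : ℝ) : ℂ) •
      ∑' n : ℕ, ((z j) ^ n / ((Real.sqrt (ρ j n) : ℝ) : ℂ)) • Φ (j, n))
    (q q2 : Fin 2 → H)
    (hq : ∀ (j i : Fin 2) (n : ℕ),
      ⟪Φ (i, n), q j⟫ = (((Real.sqrt 2)⁻¹ : ℝ) : ℂ) *
        (((Real.sqrt (ω i * (n + 1)) : ℝ) : ℂ) * ⟪Φ (i, n + 1), v j⟫ +
          ((Real.sqrt (ω i * n) : ℝ) : ℂ) * ⟪Φ (i, n - 1), v j⟫))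
    (hq2 : ∀ (j i : Fin 2) (n : ℕ),
      ⟪Φ (i, n), q2 j⟫ = (((Real.sqrt 2)⁻¹ : ℝ) : ℂ) *
        (((Real.sqrt (ω i * (n + 1)) : ℝ) : ℂ) * ⟪Φ (i, n + 1), q j⟫ +
          ((Real.sqrt (ω i * n) : ℝ) : ℂ) * ⟪Φ (i, n - 1), q j⟫))
    (j : Fin 2) :
    ⟪v j, q j⟫ ^ 2 =
      ((2 * (r j) ^ 2 * (Real.cos (θ j)) ^ 2 * (N⁻¹ * Real.exp ((r j) ^ 2 / ω j)) ^ 2 : ℝ) : ℂ) ∧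
    ⟪v j, q2 j⟫ =
      (((N⁻¹ * Real.exp ((r j) ^ 2 / ω j)) *
        (2 * (r j) ^ 2 * (Real.cos (θ j)) ^ 2 + ω j / 2) : ℝ) : ℂ) := by
  have hwpos : 0 < ω j := hω j
  have hrr : 0 ≤ r j := hr j
  set s : ℝ := (r j) ^ 2 / ω j with hs
  have hs0 : 0 ≤ s := by positivity
  set a : ℕ → ℝ := fun n => s ^ n / (Nat.factorial n : ℝ) with ha
  set b : ℕ → ℝ := fun n => if n = 0 then 0 else a (n - 1) with hb
  set b2 : ℕ → ℝ := fun n => if n = 0 then 0 else b (n - 1) with hb2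
  set c : ℕ → ℂ := fun n =>
    (((Real.sqrt N)⁻¹ : ℝ) : ℂ) * ((z j) ^ n / ((Real.sqrt (ρ j n) : ℝ) : ℂ)) with hc
  have hρpos : ∀ n, 0 < ρ j n := fun n => by rw [hρ]; positivity
  have hsqρ : ∀ n : ℕ, (0:ℝ) < Real.sqrt (ρ j n) := fun n => Real.sqrt_pos.mpr (hρpos n)
  have habs : ‖z j‖ = r j := by
    rw [hz j, norm_mul, Complex.norm_real, Real.norm_eq_abs, Complex.norm_exp_ofReal_mul_I, mul_one,
      abs_of_nonneg hrr]
  have hconjz : (starRingEnd ℂ) (z j) * z j = (((r j) ^ 2 : ℝ) : ℂ) := by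
    rw [mul_comm, Complex.mul_conj, Complex.normSq_eq_norm_sq, habs]
  -- the recurrence for the coefficients
  have hsplit : ∀ n : ℕ, Real.sqrt (ρ j (n + 1))
      = Real.sqrt (ω j * ((n : ℝ) + 1)) * Real.sqrt (ρ j n) := by
    intro n
    rw [← Real.sqrt_mul (by positivity : (0:ℝ) ≤ ω j * ((n : ℝ) + 1))]
    congr 1
    rw [hρ, hρ, Nat.factorial_succ]
    push_cast
    ring
  have hR : ∀ n : ℕ, ((Real.sqrt (ω j * ((n : ℝ) + 1)) : ℝ) : ℂ) * c (n + 1) = z j * c n := by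
    intro n
    have h0 : ((Real.sqrt (ω j * ((n : ℝ) + 1)) : ℝ) : ℂ) ≠ 0 :=
      Complex.ofReal_ne_zero.mpr (ne_of_gt (Real.sqrt_pos.mpr (by positivity)))
    have h1 : ((Real.sqrt (ρ j n) : ℝ) : ℂ) ≠ 0 := Complex.ofReal_ne_zero.mpr (ne_of_gt (hsqρ n))
    simp only [hc]
    rw [hsplit n, Complex.ofReal_mul, div_mul_eq_div_div, pow_succ]
    rw [show ((Real.sqrt (ω j * ((n : ℝ) + 1)) : ℝ) : ℂ)
          * ((((Real.sqrt N)⁻¹ : ℝ) : ℂ)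
            * (z j ^ n * z j / ((Real.sqrt (ω j * ((n : ℝ) + 1)) : ℝ) : ℂ)
              / ((Real.sqrt (ρ j n) : ℝ) : ℂ)))
        = (((Real.sqrt N)⁻¹ : ℝ) : ℂ)
            * (((Real.sqrt (ω j * ((n : ℝ) + 1)) : ℝ) : ℂ) * (z j ^ n * z j)
              / ((Real.sqrt (ω j * ((n : ℝ) + 1)) : ℝ) : ℂ) / ((Real.sqrt (ρ j n) : ℝ) : ℂ))
      from by ring]
    rw [mul_div_cancel_left₀ _ h0]
    ring
  have hRc : ∀ n : ℕ, ((Real.sqrt (ω j * ((n : ℝ) + 1)) : ℝ) : ℂ) * (starRingEnd ℂ) (c (n + 1))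
      = (starRingEnd ℂ) (z j) * (starRingEnd ℂ) (c n) := by
    intro n
    have h := congrArg (starRingEnd ℂ) (hR n)
    rw [map_mul (starRingEnd ℂ) (((Real.sqrt (ω j * ((n : ℝ) + 1)) : ℝ) : ℂ)) (c (n + 1)),
      map_mul (starRingEnd ℂ) (z j) (c n), Complex.conj_ofReal] at h
    exact h
  -- the modulus squared of the coefficients
  have hMa : ∀ n : ℕ, a n = ((r j) ^ 2) ^ n / ρ j n := by
    intro n
    have hfac : (0:ℝ) < (Nat.factorial n : ℝ) := by positivity
    rw [hρ]
    simp only [ha, hs]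
    rw [div_pow]
    field_simp
  have hM : ∀ n : ℕ, (starRingEnd ℂ) (c n) * c n = ((N⁻¹ * a n : ℝ) : ℂ) := by
    intro n
    have expand : (starRingEnd ℂ) (c n) * c n =
        ((((Real.sqrt N) ^ 2)⁻¹ : ℝ) : ℂ) *
          (((starRingEnd ℂ) (z j) * z j) ^ n / (((Real.sqrt (ρ j n)) ^ 2 : ℝ) : ℂ)) := by
      simp only [hc]
      rw [map_mul (starRingEnd ℂ), map_div₀ (starRingEnd ℂ), map_pow (starRingEnd ℂ),
        Complex.conj_ofReal, Complex.conj_ofReal]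
      push_cast
      ring
    rw [expand, hconjz, Real.sq_sqrt (hρpos n).le, Real.sq_sqrt hN0.le, hMa n]
    push_cast
    ring
  -- coefficients of v j
  have hnorm_a : ∀ n : ℕ, ‖(z j) ^ n / ((Real.sqrt (ρ j n) : ℝ) : ℂ)‖ = Real.sqrt (a n) := by
    intro n
    rw [norm_div, norm_pow, habs, Complex.norm_real, Real.norm_eq_abs,
      abs_of_nonneg (Real.sqrt_nonneg _)]
    have ha' : a n = ((r j) ^ n) ^ 2 / ρ j n := by
      rw [hMa n]
      congr 1
      rw [← pow_mul, ← pow_mul, mul_comm 2 n]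
    rw [ha', Real.sqrt_div (sq_nonneg _), Real.sqrt_sq (pow_nonneg hrr n)]
  have hfs : Summable (fun n : ℕ => ((z j) ^ n / ((Real.sqrt (ρ j n) : ℝ) : ℂ)) • Φ (j, n)) := by
    apply Summable.of_norm
    have hnorm : ∀ n : ℕ, ‖((z j) ^ n / ((Real.sqrt (ρ j n) : ℝ) : ℂ)) • Φ (j, n)‖
        = Real.sqrt (a n) := by
      intro n
      rw [norm_smul, Φ.orthonormal.1 (j, n), mul_one, hnorm_a n]
    rw [funext hnorm]
    have := summable_sqrt_pow_div_factorial s hs0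
    simpa only [ha] using this
  have horth := orthonormal_iff_ite.mp Φ.orthonormal
  have hcoeff : ∀ (i : Fin 2) (m : ℕ), ⟪Φ (i, m), v j⟫ = if i = j then c m else 0 := by
    intro i m
    rw [hv j, inner_smul_right]
    have hmap := (innerSL ℂ (Φ (i, m))).map_tsum hfs
    simp only [innerSL_apply_apply] at hmap
    rw [hmap]
    have hterm : ∀ n : ℕ, ⟪Φ (i, m), ((z j) ^ n / ((Real.sqrt (ρ j n) : ℝ) : ℂ)) • Φ (j, n)⟫
        = ((z j) ^ n / ((Real.sqrt (ρ j n) : ℝ) : ℂ)) * (if (i, m) = (j, n) then 1 else 0) := by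
      intro n
      rw [inner_smul_right, horth (i, m) (j, n)]
    rw [tsum_congr hterm]
    by_cases hij : i = j
    · subst hij
      rw [if_pos rfl]
      rw [tsum_eq_single m (fun n hn => by
        rw [if_neg (fun h => hn ((Prod.ext_iff.mp h).2).symm), mul_zero])]
      rw [if_pos rfl, mul_one]
    · rw [if_neg hij]
      have hzero : ∀ n : ℕ, ((z j) ^ n / ((Real.sqrt (ρ j n) : ℝ) : ℂ))
          * (if ((i : Fin 2), m) = (j, n) then (1:ℂ) else 0) = 0 := by
        intro n
        rw [if_neg (fun h => hij (Prod.ext_iff.mp h).1), mul_zero]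
      rw [tsum_congr hzero, tsum_zero, mul_zero]
  have hcoeff' : ∀ (i : Fin 2) (m : ℕ),
      ⟪v j, Φ (i, m)⟫ = if i = j then (starRingEnd ℂ) (c m) else 0 := by
    intro i m
    rw [← inner_conj_symm, hcoeff]
    split_ifs <;> simp
  have hcj : ∀ m : ℕ, ⟪Φ (j, m), v j⟫ = c m := by
    intro m
    rw [hcoeff j m]
    simp
  -- Parseval reduction
  have hinj : Function.Injective (fun n : ℕ => ((j, n) : Fin 2 × ℕ)) := by
    intro m n h
    simpa using h
  have hpars : ∀ u : H, ⟪v j, u⟫ = ∑' n : ℕ, (starRingEnd ℂ) (c n) * ⟪Φ (j, n), u⟫ := by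
    intro u
    rw [← Φ.tsum_inner_mul_inner (v j) u]
    have hsupp : Function.support (fun k : Fin 2 × ℕ => ⟪v j, Φ k⟫ * ⟪Φ k, u⟫)
        ⊆ Set.range (fun n : ℕ => ((j, n) : Fin 2 × ℕ)) := by
      intro k hk
      obtain ⟨i, n⟩ := k
      simp only [Function.mem_support] at hk
      rcases eq_or_ne i j with h | h
      · exact ⟨n, by rw [h]⟩
      · exact absurd (by rw [hcoeff', if_neg h, zero_mul]) hk
    rw [← Function.Injective.tsum_eq hinj hsupp]
    exact tsum_congr fun n => by
      show ⟪v j, Φ (j, n)⟫ * ⟪Φ (j, n), u⟫ = _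
      rw [hcoeff' j n, if_pos rfl]
  -- formula for the coefficients of q j
  set e : ℕ → ℂ := fun n => ((Real.sqrt (ω j * (n : ℝ)) : ℝ) : ℂ) * c (n - 1) with he
  have hd : ∀ n : ℕ, ⟪Φ (j, n), q j⟫
      = (((Real.sqrt 2)⁻¹ : ℝ) : ℂ) * (z j * c n + e n) := by
    intro n
    rw [hq j j n, hcj (n + 1), hcj (n - 1), hR n]
  have he1 : ∀ m : ℕ, e (m + 1) = ((Real.sqrt (ω j * ((m : ℝ) + 1)) : ℝ) : ℂ) * c m := by
    intro m
    simp only [he, Nat.add_sub_cancel, Nat.cast_add, Nat.cast_one]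
  have he0 : e 0 = 0 := by
    simp only [he]
    norm_num
  -- the key product formulas
  have hP1 : ∀ m : ℕ, (starRingEnd ℂ) (c (m + 1))
      * (((Real.sqrt (ω j * ((m : ℝ) + 1)) : ℝ) : ℂ) * c m)
      = (starRingEnd ℂ) (z j) * ((N⁻¹ * a m : ℝ) : ℂ) := by
    intro m
    calc (starRingEnd ℂ) (c (m + 1)) * (((Real.sqrt (ω j * ((m : ℝ) + 1)) : ℝ) : ℂ) * c m)
        = (((Real.sqrt (ω j * ((m : ℝ) + 1)) : ℝ) : ℂ) * (starRingEnd ℂ) (c (m + 1))) * c m := by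
          ring
      _ = ((starRingEnd ℂ) (z j) * (starRingEnd ℂ) (c m)) * c m := by rw [hRc m]
      _ = (starRingEnd ℂ) (z j) * ((starRingEnd ℂ) (c m) * c m) := by ring
      _ = (starRingEnd ℂ) (z j) * ((N⁻¹ * a m : ℝ) : ℂ) := by rw [hM m]
  have hE : ∀ n : ℕ, (starRingEnd ℂ) (c n) * e n
      = (starRingEnd ℂ) (z j) * ((N⁻¹ * b n : ℝ) : ℂ) := by
    intro n
    match n with
    | 0 =>
      rw [he0, mul_zero]
      have hb0 : b 0 = 0 := by simp [hb]
      rw [hb0]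
      norm_num
    | (m + 1) =>
      rw [he1 m, hP1 m]
      congr 2
  have hP2 : ∀ m : ℕ, (starRingEnd ℂ) (c (m + 1))
      * (((Real.sqrt (ω j * ((m : ℝ) + 1)) : ℝ) : ℂ) * e m)
      = ((starRingEnd ℂ) (z j)) ^ 2 * ((N⁻¹ * b2 (m + 1) : ℝ) : ℂ) := by
    intro m
    match m with
    | 0 =>
      rw [he0, mul_zero, mul_zero]
      have hb21 : b2 (0 + 1) = 0 := by simp [hb2, hb]
      rw [hb21]
      norm_num
    | (k + 1) =>
      rw [he1 k]
      calc (starRingEnd ℂ) (c (k + 1 + 1))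
            * (((Real.sqrt (ω j * (((k + 1 : ℕ) : ℝ) + 1)) : ℝ) : ℂ)
              * (((Real.sqrt (ω j * ((k : ℝ) + 1)) : ℝ) : ℂ) * c k))
          = ((((Real.sqrt (ω j * (((k + 1 : ℕ) : ℝ) + 1)) : ℝ) : ℂ)
              * (starRingEnd ℂ) (c (k + 1 + 1))))
            * (((Real.sqrt (ω j * ((k : ℝ) + 1)) : ℝ) : ℂ) * c k) := by ring
        _ = ((starRingEnd ℂ) (z j) * (starRingEnd ℂ) (c (k + 1)))
            * (((Real.sqrt (ω j * ((k : ℝ) + 1)) : ℝ) : ℂ) * c k) := by rw [hRc (k + 1)]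
        _ = (starRingEnd ℂ) (z j)
            * ((((Real.sqrt (ω j * ((k : ℝ) + 1)) : ℝ) : ℂ) * (starRingEnd ℂ) (c (k + 1)))
              * c k) := by ring
        _ = (starRingEnd ℂ) (z j)
            * (((starRingEnd ℂ) (z j) * (starRingEnd ℂ) (c k)) * c k) := by rw [hRc k]
        _ = ((starRingEnd ℂ) (z j)) ^ 2 * ((starRingEnd ℂ) (c k) * c k) := by ring
        _ = ((starRingEnd ℂ) (z j)) ^ 2 * ((N⁻¹ * a k : ℝ) : ℂ) := by rw [hM k]
        _ = ((starRingEnd ℂ) (z j)) ^ 2 * ((N⁻¹ * b2 (k + 1 + 1) : ℝ) : ℂ) := by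
            congr 2
  -- the q-terms
  have hTq : ∀ n : ℕ, (starRingEnd ℂ) (c n) * ⟪Φ (j, n), q j⟫
      = (((Real.sqrt 2)⁻¹ : ℝ) : ℂ) * (z j * ((N⁻¹ * a n : ℝ) : ℂ)
          + (starRingEnd ℂ) (z j) * ((N⁻¹ * b n : ℝ) : ℂ)) := by
    intro n
    rw [hd n]
    have expand : (starRingEnd ℂ) (c n)
        * ((((Real.sqrt 2)⁻¹ : ℝ) : ℂ) * (z j * c n + e n))
        = (((Real.sqrt 2)⁻¹ : ℝ) : ℂ) * (z j * ((starRingEnd ℂ) (c n) * c n)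
            + (starRingEnd ℂ) (c n) * e n) := by ring
    rw [expand, hM n, hE n]
  -- summability facts
  have SaR : Summable a := by
    have := Real.summable_pow_div_factorial s
    simpa only [ha] using this
  have hba : ∀ m : ℕ, b (m + 1) = a m := by intro m; simp [hb]
  have hb2b : ∀ m : ℕ, b2 (m + 1) = b m := by intro m; simp [hb2]
  have SbR : Summable b := by
    rw [← summable_nat_add_iff 1]
    simpa only [hba] using SaR
  have Sb2R : Summable b2 := by
    rw [← summable_nat_add_iff 1]
    simpa only [hb2b] using SbR
  have htsa : ∑' n, a n = Real.exp s := by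
    have := tsum_exp' s
    simpa only [ha] using this
  have htsb : ∑' n, b n = Real.exp s := by
    rw [Summable.tsum_eq_zero_add SbR]
    simp only [hba]
    rw [htsa]
    simp [hb]
  have htsb2 : ∑' n, b2 n = Real.exp s := by
    rw [Summable.tsum_eq_zero_add Sb2R]
    simp only [hb2b]
    rw [htsb]
    simp [hb2]
  have htsa' : ∑' n : ℕ, N⁻¹ * a n = N⁻¹ * Real.exp s := by
    rw [tsum_mul_left, htsa]
  have htsb' : ∑' n : ℕ, N⁻¹ * b n = N⁻¹ * Real.exp s := by
    rw [tsum_mul_left, htsb]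
  have htsb2' : ∑' n : ℕ, N⁻¹ * b2 n = N⁻¹ * Real.exp s := by
    rw [tsum_mul_left, htsb2]
  have coer : ∀ (g : ℕ → ℝ) (S : ℝ), Summable g → (∑' n, g n = S) → ∀ (u : ℂ),
      Summable (fun n => u * ((g n : ℝ) : ℂ)) ∧
        ∑' n, u * ((g n : ℝ) : ℂ) = u * ((S : ℝ) : ℂ) := by
    intro g S hg hS u
    have h1 : Summable fun n => ((g n : ℝ) : ℂ) := Complex.summable_ofReal.mpr hg
    refine ⟨h1.mul_left u, ?_⟩
    rw [tsum_mul_left, ← Complex.ofReal_tsum, hS]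
  -- value of ⟪v j, q j⟫
  have hre : (z j).re = r j * Real.cos (θ j) := by
    rw [hz j]
    simp [Complex.mul_re, Complex.exp_ofReal_mul_I_re]
  have hzre : z j + (starRingEnd ℂ) (z j) = ((2 * (r j * Real.cos (θ j)) : ℝ) : ℂ) := by
    rw [Complex.add_conj, hre]
  have d1s : Summable (fun n : ℕ => z j * ((N⁻¹ * a n : ℝ) : ℂ)) :=
    (coer (fun n => N⁻¹ * a n) (N⁻¹ * Real.exp s) (SaR.mul_left N⁻¹) htsa' (z j)).1
  have d2s : Summable (fun n : ℕ => (starRingEnd ℂ) (z j) * ((N⁻¹ * b n : ℝ) : ℂ)) :=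
    (coer (fun n => N⁻¹ * b n) (N⁻¹ * Real.exp s) (SbR.mul_left N⁻¹) htsb'
      ((starRingEnd ℂ) (z j))).1
  have d1t : ∑' n : ℕ, z j * ((N⁻¹ * a n : ℝ) : ℂ)
      = z j * ((N⁻¹ * Real.exp s : ℝ) : ℂ) :=
    (coer (fun n => N⁻¹ * a n) (N⁻¹ * Real.exp s) (SaR.mul_left N⁻¹) htsa' (z j)).2
  have d2t : ∑' n : ℕ, (starRingEnd ℂ) (z j) * ((N⁻¹ * b n : ℝ) : ℂ)
      = (starRingEnd ℂ) (z j) * ((N⁻¹ * Real.exp s : ℝ) : ℂ) :=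
    (coer (fun n => N⁻¹ * b n) (N⁻¹ * Real.exp s) (SbR.mul_left N⁻¹) htsb'
      ((starRingEnd ℂ) (z j))).2
  have hq1 : ⟪v j, q j⟫
      = ((((Real.sqrt 2)⁻¹ * (N⁻¹ * Real.exp s) * (2 * (r j * Real.cos (θ j)))) : ℝ) : ℂ) := by
    rw [hpars (q j), tsum_congr hTq, tsum_mul_left, Summable.tsum_add d1s d2s, d1t, d2t]
    push_cast at hzre ⊢
    linear_combination ((Real.sqrt 2 : ℝ) : ℂ)⁻¹ * ((N : ℝ) : ℂ)⁻¹
      * Complex.exp ((s : ℝ) : ℂ) * hzre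
  constructor
  · -- the squared q-value
    rw [hq1, ← Complex.ofReal_pow]
    congr 1
    have h2 : ((Real.sqrt 2)⁻¹ : ℝ) ^ 2 = 2⁻¹ := by
      rw [inv_pow, Real.sq_sqrt (by norm_num : (0:ℝ) ≤ 2)]
    rw [mul_pow, mul_pow, h2]
    ring
  · -- now the q2 part
    set g2 : ℕ → ℝ := fun n => (ω j * ((n : ℝ) + 1)) * (N⁻¹ * a n) with hg2
    have hA : ∀ n : ℕ, (starRingEnd ℂ) (c n)
        * (((Real.sqrt (ω j * ((n : ℝ) + 1)) : ℝ) : ℂ) * ⟪Φ (j, n + 1), q j⟫)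
        = (((Real.sqrt 2)⁻¹ : ℝ) : ℂ) * (z j ^ 2 * ((N⁻¹ * a n : ℝ) : ℂ)
            + ((g2 n : ℝ) : ℂ)) := by
      intro n
      have hAA : ((Real.sqrt (ω j * ((n : ℝ) + 1)) : ℝ) : ℂ)
          * ((Real.sqrt (ω j * ((n : ℝ) + 1)) : ℝ) : ℂ) = ((ω j * ((n : ℝ) + 1) : ℝ) : ℂ) := by
        norm_cast
        exact Real.mul_self_sqrt (by positivity)
      rw [hd (n + 1), he1 n]
      calc (starRingEnd ℂ) (c n) * (((Real.sqrt (ω j * ((n : ℝ) + 1)) : ℝ) : ℂ)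
              * ((((Real.sqrt 2)⁻¹ : ℝ) : ℂ) * (z j * c (n + 1)
                + ((Real.sqrt (ω j * ((n : ℝ) + 1)) : ℝ) : ℂ) * c n)))
          = (((Real.sqrt 2)⁻¹ : ℝ) : ℂ)
            * (z j * ((starRingEnd ℂ) (c n)
                  * (((Real.sqrt (ω j * ((n : ℝ) + 1)) : ℝ) : ℂ) * c (n + 1)))
              + (((Real.sqrt (ω j * ((n : ℝ) + 1)) : ℝ) : ℂ)
                  * ((Real.sqrt (ω j * ((n : ℝ) + 1)) : ℝ) : ℂ))
                * ((starRingEnd ℂ) (c n) * c n)) := by ring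
        _ = (((Real.sqrt 2)⁻¹ : ℝ) : ℂ)
            * (z j * ((starRingEnd ℂ) (c n) * (z j * c n))
              + ((ω j * ((n : ℝ) + 1) : ℝ) : ℂ) * ((starRingEnd ℂ) (c n) * c n)) := by
            rw [hR n, hAA]
        _ = (((Real.sqrt 2)⁻¹ : ℝ) : ℂ) * (z j ^ 2 * ((starRingEnd ℂ) (c n) * c n)
              + ((ω j * ((n : ℝ) + 1) : ℝ) : ℂ) * ((starRingEnd ℂ) (c n) * c n)) := by ring
        _ = (((Real.sqrt 2)⁻¹ : ℝ) : ℂ) * (z j ^ 2 * ((N⁻¹ * a n : ℝ) : ℂ)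
              + ((g2 n : ℝ) : ℂ)) := by
            rw [hM n]
            simp only [hg2]
            push_cast
            ring
    have hB : ∀ n : ℕ, (starRingEnd ℂ) (c n)
        * (((Real.sqrt (ω j * (n : ℝ)) : ℝ) : ℂ) * ⟪Φ (j, n - 1), q j⟫)
        = (((Real.sqrt 2)⁻¹ : ℝ) : ℂ) * ((((r j) ^ 2 : ℝ) : ℂ) * ((N⁻¹ * b n : ℝ) : ℂ)
            + ((starRingEnd ℂ) (z j)) ^ 2 * ((N⁻¹ * b2 n : ℝ) : ℂ)) := by
      intro n
      match n with
      | 0 =>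
        have h0 : ((Real.sqrt (ω j * ((0 : ℕ) : ℝ)) : ℝ) : ℂ) = 0 := by norm_num
        rw [h0, zero_mul, mul_zero]
        have hb0 : b 0 = 0 := by simp [hb]
        have hb20 : b2 0 = 0 := by simp [hb2]
        rw [hb0, hb20]
        norm_num
      | (m + 1) =>
        rw [show ((m + 1 : ℕ) : ℝ) = (m : ℝ) + 1 from by push_cast; ring]
        simp only [Nat.add_sub_cancel]
        rw [hd m]
        have expand : (starRingEnd ℂ) (c (m + 1))
              * (((Real.sqrt (ω j * ((m : ℝ) + 1)) : ℝ) : ℂ)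
                * ((((Real.sqrt 2)⁻¹ : ℝ) : ℂ) * (z j * c m + e m)))
            = (((Real.sqrt 2)⁻¹ : ℝ) : ℂ)
              * (z j * ((starRingEnd ℂ) (c (m + 1))
                    * (((Real.sqrt (ω j * ((m : ℝ) + 1)) : ℝ) : ℂ) * c m))
                + (starRingEnd ℂ) (c (m + 1))
                    * (((Real.sqrt (ω j * ((m : ℝ) + 1)) : ℝ) : ℂ) * e m)) := by ring
        rw [expand, hP1 m, hP2 m, hba m]
        rw [show z j * ((starRingEnd ℂ) (z j) * ((N⁻¹ * a m : ℝ) : ℂ))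
            = (((r j) ^ 2 : ℝ) : ℂ) * ((N⁻¹ * a m : ℝ) : ℂ) from by
          rw [← mul_assoc, mul_comm (z j), hconjz]]
    -- the q2-terms
    have hTq2 : ∀ n : ℕ, (starRingEnd ℂ) (c n) * ⟪Φ (j, n), q2 j⟫
        = ((((Real.sqrt 2)⁻¹ : ℝ) : ℂ) * (((Real.sqrt 2)⁻¹ : ℝ) : ℂ))
          * (z j ^ 2 * ((N⁻¹ * a n : ℝ) : ℂ) + (1 : ℂ) * ((g2 n : ℝ) : ℂ)
            + (((r j) ^ 2 : ℝ) : ℂ) * ((N⁻¹ * b n : ℝ) : ℂ)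
            + ((starRingEnd ℂ) (z j)) ^ 2 * ((N⁻¹ * b2 n : ℝ) : ℂ)) := by
      intro n
      rw [hq2 j j n]
      have expand : (starRingEnd ℂ) (c n) * ((((Real.sqrt 2)⁻¹ : ℝ) : ℂ)
            * (((Real.sqrt (ω j * ((n : ℝ) + 1)) : ℝ) : ℂ) * ⟪Φ (j, n + 1), q j⟫
              + ((Real.sqrt (ω j * (n : ℝ)) : ℝ) : ℂ) * ⟪Φ (j, n - 1), q j⟫))
          = (((Real.sqrt 2)⁻¹ : ℝ) : ℂ)
            * ((starRingEnd ℂ) (c n)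
                * (((Real.sqrt (ω j * ((n : ℝ) + 1)) : ℝ) : ℂ) * ⟪Φ (j, n + 1), q j⟫)
              + (starRingEnd ℂ) (c n)
                * (((Real.sqrt (ω j * (n : ℝ)) : ℝ) : ℂ) * ⟪Φ (j, n - 1), q j⟫)) := by ring
      rw [expand, hA n, hB n]
      ring
    -- summability and value of the g2 series
    have hg2eq : ∀ n : ℕ, g2 n = ω j * N⁻¹ * a n + (r j) ^ 2 * N⁻¹ * b n := by
      intro n
      have hnab : (n : ℝ) * a n = s * b n := by
        match n with
        | 0 => simp [hb]
        | (m + 1) =>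
          rw [hba m]
          simp only [ha]
          rw [Nat.factorial_succ, pow_succ]
          have hf : ((Nat.factorial m : ℝ)) ≠ 0 := by positivity
          have hm1 : ((m : ℝ) + 1) ≠ 0 := by positivity
          push_cast
          field_simp
      have hws : ω j * s = (r j) ^ 2 := by
        rw [hs]
        field_simp
      simp only [hg2]
      calc (ω j * ((n : ℝ) + 1)) * (N⁻¹ * a n)
          = ω j * N⁻¹ * a n + ω j * N⁻¹ * ((n : ℝ) * a n) := by ring
        _ = ω j * N⁻¹ * a n + ω j * N⁻¹ * (s * b n) := by rw [hnab]
        _ = ω j * N⁻¹ * a n + (ω j * s) * N⁻¹ * b n := by ring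
        _ = ω j * N⁻¹ * a n + (r j) ^ 2 * N⁻¹ * b n := by rw [hws]
    have Sg2 : Summable g2 :=
      Summable.congr ((SaR.mul_left (ω j * N⁻¹)).add (SbR.mul_left ((r j) ^ 2 * N⁻¹)))
        (fun n => (hg2eq n).symm)
    have htsg2 : ∑' n, g2 n = ω j * N⁻¹ * Real.exp s + (r j) ^ 2 * N⁻¹ * Real.exp s := by
      rw [tsum_congr hg2eq,
        Summable.tsum_add (SaR.mul_left (ω j * N⁻¹)) (SbR.mul_left ((r j) ^ 2 * N⁻¹)),
        tsum_mul_left, tsum_mul_left, htsa, htsb]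
    -- the four coerced sums
    have c1s : Summable (fun n : ℕ => z j ^ 2 * ((N⁻¹ * a n : ℝ) : ℂ)) :=
      (coer (fun n => N⁻¹ * a n) (N⁻¹ * Real.exp s) (SaR.mul_left N⁻¹) htsa' (z j ^ 2)).1
    have c2s : Summable (fun n : ℕ => (1 : ℂ) * ((g2 n : ℝ) : ℂ)) :=
      (coer g2 (ω j * N⁻¹ * Real.exp s + (r j) ^ 2 * N⁻¹ * Real.exp s) Sg2 htsg2 1).1
    have c3s : Summable (fun n : ℕ => (((r j) ^ 2 : ℝ) : ℂ) * ((N⁻¹ * b n : ℝ) : ℂ)) :=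
      (coer (fun n => N⁻¹ * b n) (N⁻¹ * Real.exp s) (SbR.mul_left N⁻¹) htsb'
        (((r j) ^ 2 : ℝ) : ℂ)).1
    have c4s : Summable (fun n : ℕ => ((starRingEnd ℂ) (z j)) ^ 2 * ((N⁻¹ * b2 n : ℝ) : ℂ)) :=
      (coer (fun n => N⁻¹ * b2 n) (N⁻¹ * Real.exp s) (Sb2R.mul_left N⁻¹) htsb2'
        (((starRingEnd ℂ) (z j)) ^ 2)).1
    have c1t : ∑' n : ℕ, z j ^ 2 * ((N⁻¹ * a n : ℝ) : ℂ)
        = z j ^ 2 * ((N⁻¹ * Real.exp s : ℝ) : ℂ) :=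
      (coer (fun n => N⁻¹ * a n) (N⁻¹ * Real.exp s) (SaR.mul_left N⁻¹) htsa' (z j ^ 2)).2
    have c2t : ∑' n : ℕ, (1 : ℂ) * ((g2 n : ℝ) : ℂ)
        = (1 : ℂ) * ((ω j * N⁻¹ * Real.exp s + (r j) ^ 2 * N⁻¹ * Real.exp s : ℝ) : ℂ) :=
      (coer g2 (ω j * N⁻¹ * Real.exp s + (r j) ^ 2 * N⁻¹ * Real.exp s) Sg2 htsg2 1).2
    have c3t : ∑' n : ℕ, (((r j) ^ 2 : ℝ) : ℂ) * ((N⁻¹ * b n : ℝ) : ℂ)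
        = (((r j) ^ 2 : ℝ) : ℂ) * ((N⁻¹ * Real.exp s : ℝ) : ℂ) :=
      (coer (fun n => N⁻¹ * b n) (N⁻¹ * Real.exp s) (SbR.mul_left N⁻¹) htsb'
        (((r j) ^ 2 : ℝ) : ℂ)).2
    have c4t : ∑' n : ℕ, ((starRingEnd ℂ) (z j)) ^ 2 * ((N⁻¹ * b2 n : ℝ) : ℂ)
        = ((starRingEnd ℂ) (z j)) ^ 2 * ((N⁻¹ * Real.exp s : ℝ) : ℂ) :=
      (coer (fun n => N⁻¹ * b2 n) (N⁻¹ * Real.exp s) (Sb2R.mul_left N⁻¹) htsb2'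
        (((starRingEnd ℂ) (z j)) ^ 2)).2
    -- the z^2 + conj z ^2 identity
    have hargeq : ((θ j : ℝ) : ℂ) * Complex.I + ((θ j : ℝ) : ℂ) * Complex.I
        = ((2 * θ j : ℝ) : ℂ) * Complex.I := by
      push_cast
      ring
    have hzz2 : z j ^ 2 = (((r j) ^ 2 : ℝ) : ℂ)
        * Complex.exp (((2 * θ j : ℝ) : ℂ) * Complex.I) := by
      rw [hz j, mul_pow, pow_two (Complex.exp _), ← Complex.exp_add, hargeq]
      push_cast
      ring
    have hre2 : (z j ^ 2).re = (r j) ^ 2 * (2 * (Real.cos (θ j)) ^ 2 - 1) := by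
      rw [hzz2]
      simp only [Complex.mul_re, Complex.ofReal_re, Complex.ofReal_im,
        Complex.exp_ofReal_mul_I_re, zero_mul, sub_zero]
      rw [Real.cos_two_mul]
    have hz2sum : z j ^ 2 + ((starRingEnd ℂ) (z j)) ^ 2
        = ((2 * ((r j) ^ 2 * (2 * (Real.cos (θ j)) ^ 2 - 1)) : ℝ) : ℂ) := by
      have hmp : ((starRingEnd ℂ) (z j)) ^ 2 = (starRingEnd ℂ) (z j ^ 2) := (map_pow _ _ _).symm
      rw [hmp, Complex.add_conj, hre2]
    -- assemble
    rw [hpars (q2 j), tsum_congr hTq2, tsum_mul_left,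
      Summable.tsum_add ((c1s.add c2s).add c3s) c4s, Summable.tsum_add (c1s.add c2s) c3s,
      Summable.tsum_add c1s c2s,
      c1t, c2t, c3t, c4t]
    have hKKr : ((Real.sqrt 2)⁻¹ : ℝ) * ((Real.sqrt 2)⁻¹ : ℝ) = 2⁻¹ := by
      rw [← mul_inv, Real.mul_self_sqrt (by norm_num : (0:ℝ) ≤ 2)]
    have hKK : (((Real.sqrt 2)⁻¹ : ℝ) : ℂ) * (((Real.sqrt 2)⁻¹ : ℝ) : ℂ)
        = (((2:ℝ)⁻¹ : ℝ) : ℂ) := by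
      rw [← Complex.ofReal_mul, hKKr]
    rw [hKK]
    push_cast at hz2sum ⊢
    linear_combination (2:ℂ)⁻¹ * ((N : ℝ) : ℂ)⁻¹ * Complex.exp ((s : ℝ) : ℂ) * hz2sum

/-- Dispersion of the quadrature operator `Q = (A + A†)/√2` in the Jaynes–Cummings
vector coherent states:
`(ΔQ)²_{|Z,1⟩} = 2r₁² cos²θ₁ G𝔊 + (ω₊/2)G` and
`(ΔQ)²_{|Z,2⟩} = 2r₂² cos²θ₂ G𝔊 + (ω₋/2)𝔊`.  Here `q j = Q|Z,j⟩` and `q2 j = Q²|Z,j⟩`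
are encoded through their basis coefficients:
`⟨χ_i ⊗ φ_n | Q u⟩ = (√(ω_i(n+1)) ⟨χ_i ⊗ φ_{n+1}|u⟩ + √(ω_i n) ⟨χ_i ⊗ φ_{n-1}|u⟩)/√2`. -/
theorem stmt_18 {H : Type*} [NormedAddCommGroup H] [InnerProductSpace ℂ H]
    [CompleteSpace H] (Φ : HilbertBasis (Fin 2 × ℕ) ℂ H)
    (ω r θ : Fin 2 → ℝ) (hω : ∀ j, 0 < ω j) (hr : ∀ j, 0 ≤ r j)
    (z : Fin 2 → ℂ) (hz : ∀ j, z j = (r j : ℂ) * Complex.exp ((θ j : ℂ) * Complex.I))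
    (ρ : Fin 2 → ℕ → ℝ) (hρ : ∀ j n, ρ j n = (ω j) ^ n * (Nat.factorial n : ℝ))
    (N : ℝ) (hN : N = Real.exp ((r 0) ^ 2 / ω 0) + Real.exp ((r 1) ^ 2 / ω 1))
    (G Gg : ℝ) (hG : G = Real.exp ((r 0) ^ 2 / ω 0) / N)
    (hGg : Gg = Real.exp ((r 1) ^ 2 / ω 1) / N)
    (v : Fin 2 → H)
    (hv : ∀ j, v j = (((Real.sqrt N)⁻¹ : ℝ) : ℂ) •
      ∑' n : ℕ, ((z j) ^ n / ((Real.sqrt (ρ j n) : ℝ) : ℂ)) • Φ (j, n))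
    (q q2 : Fin 2 → H)
    (hq : ∀ (j i : Fin 2) (n : ℕ),
      ⟪Φ (i, n), q j⟫ = (((Real.sqrt 2)⁻¹ : ℝ) : ℂ) *
        (((Real.sqrt (ω i * (n + 1)) : ℝ) : ℂ) * ⟪Φ (i, n + 1), v j⟫ +
          ((Real.sqrt (ω i * n) : ℝ) : ℂ) * ⟪Φ (i, n - 1), v j⟫))
    (hq2 : ∀ (j i : Fin 2) (n : ℕ),
      ⟪Φ (i, n), q2 j⟫ = (((Real.sqrt 2)⁻¹ : ℝ) : ℂ) *
        (((Real.sqrt (ω i * (n + 1)) : ℝ) : ℂ) * ⟪Φ (i, n + 1), q j⟫ +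
          ((Real.sqrt (ω i * n) : ℝ) : ℂ) * ⟪Φ (i, n - 1), q j⟫)) :
    ⟪v 0, q2 0⟫ - ⟪v 0, q 0⟫ ^ 2 =
      ((2 * (r 0) ^ 2 * (Real.cos (θ 0)) ^ 2 * G * Gg + ω 0 / 2 * G : ℝ) : ℂ) ∧
    ⟪v 1, q2 1⟫ - ⟪v 1, q 1⟫ ^ 2 =
      ((2 * (r 1) ^ 2 * (Real.cos (θ 1)) ^ 2 * G * Gg + ω 1 / 2 * Gg : ℝ) : ℂ) := by
  have hN0 : 0 < N := by rw [hN]; positivity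
  have hNe : N ≠ 0 := ne_of_gt hN0
  have key0 := key_lemma Φ ω r θ hω hr z hz ρ hρ N hN0 v hv q q2 hq hq2 0
  have key1 := key_lemma Φ ω r θ hω hr z hz ρ hρ N hN0 v hv q q2 hq hq2 1
  constructor
  · rw [key0.1, key0.2, ← Complex.ofReal_sub]
    congr 1
    rw [hG, hGg]
    have : Real.exp ((r 1) ^ 2 / ω 1) = N - Real.exp ((r 0) ^ 2 / ω 0) := by rw [hN]; ring
    rw [this]
    field_simp
    ring
  · rw [key1.1, key1.2, ← Complex.ofReal_sub]
    congr 1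
    rw [hG, hGg]
    have : Real.exp ((r 0) ^ 2 / ω 0) = N - Real.exp ((r 1) ^ 2 / ω 1) := by rw [hN]; ring
    rw [this]
    field_simp
    ring
end

section
/- Temporal stability of the Jaynes-Cummings vector coherent states: for t ∈ ℝ let T(t) be the unitary operator on ℂ² ⊗ 𝔥 determined by T(t)(χ₁ ⊗ φ_n) = e^{−i ω₊ n t} χ₁ ⊗ φ_n and T(t)(χ₂ ⊗ φ_n) = e^{−i ω₋ n t} χ₂ ⊗ φ_n. Then T(t)|Z,1⟩ = |Z₊(t),1⟩ and T(t)|Z,2⟩ = |Z₋(t),2⟩, where |Z₊(t),1⟩ and |Z₋(t),2⟩ denote the vector coherent states obtained from |Z,1⟩ and |Z,2⟩ by replacing z₁ with z₁ e^{−iω₊ t} and z₂ with z₂ e^{−iω₋ t} respectively (the normalization factor N(Z) is unchanged since |z_j e^{−iω_± t}| = |z_j|). -/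
open Real
open scoped ComplexInnerProductSpace

/-- Temporal stability of the Jaynes–Cummings vector coherent states: the time evolution
operator `T(t)(χ_j ⊗ φ_n) = e^{-iω_j n t} χ_j ⊗ φ_n` sends `|Z,j⟩` to the vector
coherent state with `z_j` replaced by `z_j e^{-iω_j t}` (same normalization factor). -/
theorem stmt_19 {H : Type*} [NormedAddCommGroup H] [InnerProductSpace ℂ H]
    [CompleteSpace H] (Φ : HilbertBasis (Fin 2 × ℕ) ℂ H)
    (ω r θ : Fin 2 → ℝ) (hω : ∀ j, 0 < ω j) (hr : ∀ j, 0 ≤ r j)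
    (z : Fin 2 → ℂ) (hz : ∀ j, z j = (r j : ℂ) * Complex.exp ((θ j : ℂ) * Complex.I))
    (ρ : Fin 2 → ℕ → ℝ) (hρ : ∀ j n, ρ j n = (ω j) ^ n * (Nat.factorial n : ℝ))
    (N : ℝ) (hN : N = Real.exp ((r 0) ^ 2 / ω 0) + Real.exp ((r 1) ^ 2 / ω 1))
    (v : Fin 2 → H)
    (hv : ∀ j, v j = (((Real.sqrt N)⁻¹ : ℝ) : ℂ) •
      ∑' n : ℕ, ((z j) ^ n / ((Real.sqrt (ρ j n) : ℝ) : ℂ)) • Φ (j, n))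
    (vt : ℝ → Fin 2 → H)
    (hvt : ∀ (t : ℝ) (j : Fin 2), vt t j = (((Real.sqrt N)⁻¹ : ℝ) : ℂ) •
      ∑' n : ℕ, ((z j * Complex.exp (-Complex.I * (ω j : ℂ) * (t : ℂ))) ^ n /
        ((Real.sqrt (ρ j n) : ℝ) : ℂ)) • Φ (j, n))
    (T : ℝ → H →L[ℂ] H)
    (hT : ∀ (t : ℝ) (j : Fin 2) (n : ℕ),
      T t (Φ (j, n)) = Complex.exp (-Complex.I * (ω j : ℂ) * (n : ℂ) * (t : ℂ)) • Φ (j, n))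
    (t : ℝ) (j : Fin 2) :
    T t (v j) = vt t j := by
  classical
  set c : ℕ → ℂ := fun n => (z j) ^ n / ((Real.sqrt (ρ j n) : ℝ) : ℂ) with hc
  -- the family n ↦ Φ (j, n) is orthonormal
  have hinj : Function.Injective (fun n : ℕ => ((j, n) : Fin 2 × ℕ)) := by
    intro a b h; simpa using congrArg Prod.snd h
  have honb : Orthonormal ℂ (fun n : ℕ => Φ (j, n)) :=
    Φ.orthonormal.comp _ hinj
  -- norm of z j
  have hzn : ‖z j‖ = r j := by
    rw [hz j]
    simp [map_mul, Complex.norm_exp_ofReal_mul_I,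
      Complex.norm_real, abs_of_nonneg (hr j)]
  have hρpos : ∀ n, 0 < ρ j n := by
    intro n
    rw [hρ]
    have h := hω j
    positivity
  -- summability of ‖c n‖^2
  have hsum2 : Summable fun n => ‖c n‖ ^ 2 := by
    have key : ∀ n, ‖c n‖ ^ 2 = ((r j) ^ 2 / ω j) ^ n / (Nat.factorial n : ℝ) := by
      intro n
      have h1 : ‖c n‖ = (r j) ^ n / Real.sqrt (ρ j n) := by
        rw [hc]
        simp only [norm_div, norm_pow, hzn, Complex.norm_real,
          Real.norm_eq_abs, abs_of_nonneg (Real.sqrt_nonneg _)]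
      rw [h1, div_pow, Real.sq_sqrt (hρpos n).le, hρ, div_pow, div_div,
        ← pow_mul, ← pow_mul]
      ring_nf
    simp only [key]
    exact Real.summable_pow_div_factorial _
  -- summability of the series
  have hsum : Summable fun n => c n • Φ (j, n) := by
    have := (honb.orthogonalFamily.summable_iff_norm_sq_summable c).2 hsum2
    simpa [LinearIsometry.toSpanSingleton_apply] using this
  -- termwise action of T t
  have hterm : ∀ n : ℕ, T t (c n • Φ (j, n)) =
      ((z j * Complex.exp (-Complex.I * (ω j : ℂ) * (t : ℂ))) ^ n /
        ((Real.sqrt (ρ j n) : ℝ) : ℂ)) • Φ (j, n) := by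
    intro n
    rw [map_smul, hT t j n, smul_smul]
    congr 1
    rw [hc, mul_pow]
    have : Complex.exp (-Complex.I * (ω j : ℂ) * (t : ℂ)) ^ n
        = Complex.exp (-Complex.I * (ω j : ℂ) * (n : ℂ) * (t : ℂ)) := by
      rw [← Complex.exp_nat_mul]; ring_nf
    rw [this]; ring
  rw [hv j, hvt t j, map_smul, (T t).map_tsum hsum]
  congr 1
  exact tsum_congr hterm
end
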